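/- arXiv:2511.04378 — 8 statements merged into one kernel-verified Lean document; each statement's English description precedes it below -/
import Mathlib

section
/- For Teichmüller lifts in the Witt vectors W(k) over a perfect field k of characteristic p (with |k| = p^f), for all λ, μ ∈ k one has [λ] + [μ] ≡ [λ + μ] + p·[S(λ,μ)^{p^{f-1}}] (mod p²), where S(x,y) = (x^p + y^p − (x+y)^p)/p ∈ ℤ[x,y]. -/
open MvPolynomial

namespace StmtAux

variable {p : ℕ} [hp : Fact p.Prime]

lemma wittAdd_one (S : MvPolynomial (Fin 2) ℤ)
    (hS : (p : MvPolynomial (Fin 2) ℤ) * S = X 0 ^ p + X 1 ^ p - (X 0 + X 1) ^ p) :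
    WittVector.wittAdd p 1 =
      X (0, 1) + X (1, 1) + rename (fun i => (i, (0 : ℕ))) S := by
  have hpne : (p : MvPolynomial (Fin 2 × ℕ) ℤ) ≠ 0 := by
    exact_mod_cast Nat.cast_ne_zero.2 hp.out.ne_zero
  apply mul_left_cancel₀ hpne
  have h := wittStructureInt_prop p (X 0 + X 1 : MvPolynomial (Fin 2) ℤ) 1
  rw [wittPolynomial_one] at h
  simp only [map_add, map_mul, bind₁_X_right, bind₁_C_right, map_pow, map_rename,
    rename_X, rename_C, map_natCast] at h
  have hS' : (p : MvPolynomial (Fin 2 × ℕ) ℤ) * rename (fun i => (i, (0 : ℕ))) S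
      = X (0, 0) ^ p + X (1, 0) ^ p - (X (0, 0) + X (1, 0)) ^ p := by
    have := congrArg (rename (fun i : Fin 2 => (i, (0 : ℕ)))) hS
    simpa only [map_mul, map_add, map_sub, map_pow, rename_X, map_natCast] using this
  have e0 : wittStructureInt p (X 0 + X 1 : MvPolynomial (Fin 2) ℤ) 0 = X (0, 0) + X (1, 0) :=
    WittVector.wittAdd_zero p
  have pexp : wittStructureInt p (X 0 + X 1 : MvPolynomial (Fin 2) ℤ) 0 ^ p
      = ((X (0, 0) : MvPolynomial (Fin 2 × ℕ) ℤ) + X (1, 0)) ^ p := by rw [e0]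
  show (p : MvPolynomial (Fin 2 × ℕ) ℤ) * wittStructureInt p (X 0 + X 1) 1 = _
  linear_combination h - hS' - pexp

lemma add_coeff_one {R : Type} [CommRing R] (S : MvPolynomial (Fin 2) ℤ)
    (hS : (p : MvPolynomial (Fin 2) ℤ) * S = X 0 ^ p + X 1 ^ p - (X 0 + X 1) ^ p)
    (a b : WittVector p R) :
    (a + b).coeff 1 = a.coeff 1 + b.coeff 1 + aeval ![a.coeff 0, b.coeff 0] S := by
  rw [WittVector.add_coeff, wittAdd_one S hS]
  simp only [WittVector.peval, map_add, aeval_X, aeval_rename, Function.uncurry_apply_pair,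
    Matrix.cons_val_zero, Matrix.cons_val_one, Matrix.head_cons]
  have hfg : (Function.uncurry ![a.coeff, b.coeff] ∘ fun i => (i, (0 : ℕ)))
      = (![a.coeff 0, b.coeff 0] : Fin 2 → R) := by
    funext i; fin_cases i <;> rfl
  rw [hfg]

lemma S_x_zero {R : Type} [CommRing R] (S : MvPolynomial (Fin 2) ℤ)
    (hS : (p : MvPolynomial (Fin 2) ℤ) * S = X 0 ^ p + X 1 ^ p - (X 0 + X 1) ^ p)
    (x : R) : aeval ![x, 0] S = 0 := by
  have hb : bind₁ (![X 0, 0] : Fin 2 → MvPolynomial (Fin 2) ℤ) S = 0 := by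
    have hpne : (p : MvPolynomial (Fin 2) ℤ) ≠ 0 := by
      exact_mod_cast Nat.cast_ne_zero.2 hp.out.ne_zero
    apply mul_left_cancel₀ hpne
    have := congrArg (bind₁ (![X 0, 0] : Fin 2 → MvPolynomial (Fin 2) ℤ)) hS
    simp only [map_mul, map_add, map_sub, map_pow, bind₁_X_right, map_natCast,
      Matrix.cons_val_zero, Matrix.cons_val_one, Matrix.head_cons] at this
    rw [this]
    rw [zero_pow hp.out.ne_zero]
    ring
  have h2 : aeval (![x, 0] : Fin 2 → R) S = aeval (fun _ : Fin 2 => x) (bind₁ (![X 0, 0] : Fin 2 → MvPolynomial (Fin 2) ℤ) S) := by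
    rw [aeval_bind₁]
    have hfg : (fun i : Fin 2 => aeval (fun _ : Fin 2 => x) ((![X 0, 0] : Fin 2 → MvPolynomial (Fin 2) ℤ) i)) = (![x, 0] : Fin 2 → R) := by
      funext i; fin_cases i <;> simp
    rw [hfg]
  rw [h2, hb, map_zero]

lemma frob_teich {k : Type} [CommRing k] [CharP k p] (t : k) :
    WittVector.frobenius (WittVector.teichmuller p t) = WittVector.teichmuller p (t ^ p) := by
  ext n
  rw [WittVector.coeff_frobenius_charP]
  cases n with
  | zero => simp only [WittVector.teichmuller_coeff_zero]
  | succ n =>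
      rw [WittVector.teichmuller_coeff_pos p _ _ n.succ_pos,
        WittVector.teichmuller_coeff_pos p _ _ n.succ_pos, zero_pow hp.out.ne_zero]

lemma p_mul_teich {k : Type} [CommRing k] [CharP k p] (t : k) :
    (p : WittVector p k) * WittVector.teichmuller p t =
      WittVector.verschiebung (WittVector.teichmuller p (t ^ p)) := by
  rw [← frob_teich, WittVector.verschiebung_frobenius, mul_comm]

omit hp in
lemma init_coeff {R : Type} [CommRing R] (n : ℕ) (x : WittVector p R) (i : ℕ) :
    (WittVector.init n x).coeff i = if i < n then x.coeff i else 0 := by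
  simp only [WittVector.init, WittVector.select, WittVector.coeff_mk]
  split_ifs <;> rfl

end StmtAux

open StmtAux in
/-- For Teichmüller lifts in the Witt vectors `W(k)` over the finite field `k` with
`p^f` elements: for all `λ, μ ∈ k`,
`[λ] + [μ] ≡ [λ + μ] + p · [S(λ,μ)^(p^(f-1))] (mod p²)`,
where `S(x,y) = (x^p + y^p − (x+y)^p)/p ∈ ℤ[x,y]` (encoded by the hypothesis
`p * S = X^p + Y^p − (X+Y)^p`). -/
theorem stmt_2 (p f : ℕ) [Fact p.Prime] (hf : 0 < f)
    (k : Type) [Field k] [Fintype k] [CharP k p] (hcard : Fintype.card k = p ^ f)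
    (S : MvPolynomial (Fin 2) ℤ)
    (hS : (p : MvPolynomial (Fin 2) ℤ) * S = X 0 ^ p + X 1 ^ p - (X 0 + X 1) ^ p)
    (lam mu : k) :
    ∃ w : WittVector p k,
      WittVector.teichmuller p lam + WittVector.teichmuller p mu =
        WittVector.teichmuller p (lam + mu) +
          (p : WittVector p k) *
            WittVector.teichmuller p ((MvPolynomial.aeval ![lam, mu] S) ^ p ^ (f - 1)) +
          (p : WittVector p k) ^ 2 * w := by
  classical
  set t : k := (aeval ![lam, mu] S) ^ p ^ (f - 1) with ht
  have htp : t ^ p = aeval ![lam, mu] S := by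
    rw [ht, ← pow_mul, ← pow_succ, Nat.sub_add_cancel hf, ← hcard, FiniteField.pow_card]
  set A := WittVector.teichmuller p lam + WittVector.teichmuller p mu with hA
  set B := WittVector.teichmuller p (lam + mu) + (p : WittVector p k) * WittVector.teichmuller p t
    with hB
  have hpt : (p : WittVector p k) * WittVector.teichmuller p t
      = WittVector.verschiebung (WittVector.teichmuller p (t ^ p)) := p_mul_teich t
  have hA0 : A.coeff 0 = lam + mu := by
    rw [hA, WittVector.add_coeff_zero, WittVector.teichmuller_coeff_zero,
      WittVector.teichmuller_coeff_zero]
  have hB0 : B.coeff 0 = lam + mu := by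
    rw [hB, WittVector.add_coeff_zero, hpt, WittVector.teichmuller_coeff_zero,
      WittVector.verschiebung_coeff_zero, add_zero]
  have hA1 : A.coeff 1 = aeval ![lam, mu] S := by
    rw [hA, add_coeff_one S hS, WittVector.teichmuller_coeff_pos p lam 1 one_pos,
      WittVector.teichmuller_coeff_pos p mu 1 one_pos, WittVector.teichmuller_coeff_zero,
      WittVector.teichmuller_coeff_zero, add_zero, zero_add]
  have hV1 : (WittVector.verschiebung (WittVector.teichmuller p (t ^ p))).coeff 1 = t ^ p := by
    rw [show (1 : ℕ) = 0 + 1 from rfl, WittVector.verschiebung_coeff_add_one,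
      WittVector.teichmuller_coeff_zero]
  have hB1 : B.coeff 1 = aeval ![lam, mu] S := by
    rw [hB, add_coeff_one S hS, hpt, hV1, WittVector.teichmuller_coeff_pos p _ 1 one_pos,
      WittVector.teichmuller_coeff_zero, WittVector.verschiebung_coeff_zero, htp,
      S_x_zero S hS, zero_add, add_zero]
  set x := A - B with hx
  have hinit : WittVector.init 2 A = WittVector.init 2 B := by
    ext n
    rw [init_coeff, init_coeff]
    split_ifs with h
    · interval_cases n
      · exact hA0.trans hB0.symm
      · exact hA1.trans hB1.symm
    · rfl
  have hxc : ∀ i < 2, x.coeff i = 0 := by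
    have h0 : WittVector.init 2 x = 0 := by
      rw [hx, WittVector.init_sub, hinit, sub_self]
      ext n
      rw [init_coeff, WittVector.zero_coeff]
      split_ifs <;> simp [WittVector.zero_coeff]
    intro i hi
    have h1 : (WittVector.init 2 x).coeff i = x.coeff i := by rw [init_coeff, if_pos hi]
    rw [← h1, h0, WittVector.zero_coeff]
  have key : x = WittVector.verschiebung^[2] (x.shift 2) :=
    WittVector.eq_iterate_verschiebung hxc
  let F := WittVector.frobeniusEquiv p k
  refine ⟨F.symm (F.symm (x.shift 2)), ?_⟩
  have hFs : ∀ z : WittVector p k, WittVector.frobenius (F.symm z) = z := by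
    intro z
    rw [← WittVector.frobeniusEquiv_apply]
    exact F.apply_symm_apply z
  have hpmul : ∀ y : WittVector p k,
      (p : WittVector p k) * y = WittVector.verschiebung (WittVector.frobenius y) := fun y => by
    rw [WittVector.verschiebung_frobenius, mul_comm]
  have key2 : x = WittVector.verschiebung (WittVector.verschiebung (x.shift 2)) := by
    conv_lhs => rw [key]
    rfl
  have hw : (p : WittVector p k) ^ 2 * (F.symm (F.symm (x.shift 2))) = x := by
    rw [pow_two, mul_assoc, hpmul (F.symm (F.symm (x.shift 2))), hFs,
      hpmul (WittVector.verschiebung (F.symm (x.shift 2))), WittVector.frobenius_verschiebung,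
      mul_comm, hpmul (F.symm (x.shift 2)), hFs]
    exact key2.symm
  rw [hw, hx]
  ring
end

section
/- Let a, b ∈ O be elements of the valuation ring of a finite extension F/ℚ_p with ramification index e and uniformizer ϖ, with Teichmüller expansions a = Σ[a_i]ϖ^i, b = Σ[b_i]ϖ^i. Then a + b ≡ Σ_{i=0}^{e-1} [a_i + b_i] ϖ^i + [a_e + b_e + u_0 · S(a_0, b_0)^{p^{f-1}}] ϖ^e (mod ϖ^{e+1}), where u = p/ϖ^e ∈ O^× and u_0 is its residue, and S(x,y) = (x^p + y^p − (x+y)^p)/p. -/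
open MvPolynomial Finset

private lemma binom2 {R : Type*} [CommRing R] (A δ : R) :
    ∀ n : ℕ, ∃ B : R, (A + δ) ^ (n + 1) = A ^ (n + 1) + ((n + 1 : ℕ) : R) * A ^ n * δ + δ ^ 2 * B := by
  intro n
  induction n with
  | zero => exact ⟨0, by ring⟩
  | succ n ih =>
    obtain ⟨B, hB⟩ := ih
    refine ⟨((n + 1 : ℕ) : R) * A ^ n + A * B + δ * B, ?_⟩
    have h : (A + δ) ^ (n + 1 + 1) = (A + δ) * (A + δ) ^ (n + 1) := by ring
    rw [h, hB]
    push_cast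
    ring

private lemma frob_zmod (p : ℕ) [Fact p.Prime] (φ : MvPolynomial (Fin 2) (ZMod p)) :
    bind₁ (fun i => X i ^ p) φ = φ ^ p := by
  have h : ((bind₁ (fun i : Fin 2 => (X i : MvPolynomial (Fin 2) (ZMod p)) ^ p)) :
        MvPolynomial (Fin 2) (ZMod p) →+* MvPolynomial (Fin 2) (ZMod p))
      = (frobenius (MvPolynomial (Fin 2) (ZMod p)) p) := by
    apply MvPolynomial.ringHom_ext
    · intro a
      simp [frobenius_def, ← C_pow, ZMod.pow_card]
    · intro i
      simp [frobenius_def]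
  have := congrFun (congrArg (fun (f : MvPolynomial (Fin 2) (ZMod p) →+* _) => (f : _ → _)) h) φ
  simpa [frobenius_def] using this

private lemma frob_int (p : ℕ) [Fact p.Prime] (S : MvPolynomial (Fin 2) ℤ) :
    (p : MvPolynomial (Fin 2) ℤ) ∣ bind₁ (fun i => X i ^ p) S - S ^ p := by
  have hmap : map (Int.castRingHom (ZMod p)) (bind₁ (fun i => X i ^ p) S - S ^ p) = 0 := by
    rw [map_sub, map_pow, map_bind₁, sub_eq_zero]
    simpa using frob_zmod p (map (Int.castRingHom (ZMod p)) S)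
  have hker : bind₁ (fun i => X i ^ p) S - S ^ p ∈
      RingHom.ker (map (Int.castRingHom (ZMod p)) :
        MvPolynomial (Fin 2) ℤ →+* MvPolynomial (Fin 2) (ZMod p)) := hmap
  rw [MvPolynomial.ker_map] at hker
  have hk2 : RingHom.ker (Int.castRingHom (ZMod p)) = Ideal.span {(p : ℤ)} := by
    ext n
    simp [RingHom.mem_ker, Ideal.mem_span_singleton, ZMod.intCast_zmod_eq_zero_iff_dvd]
  rw [hk2, Ideal.map_span] at hker
  simpa [Ideal.mem_span_singleton] using hker

private lemma frob_O {O : Type*} [CommRing O] (p : ℕ) [Fact p.Prime]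
    (S : MvPolynomial (Fin 2) ℤ) (z w : O) :
    (p : O) ∣ aeval ![z ^ p, w ^ p] S - (aeval ![z, w] S) ^ p := by
  obtain ⟨c, hc⟩ := frob_int p S
  refine ⟨aeval ![z, w] c, ?_⟩
  have h := congrArg (aeval ![z, w]) hc
  rw [map_sub, map_pow, map_mul, map_natCast, aeval_bind₁] at h
  have harg : (fun i => aeval ![z, w] ((fun i : Fin 2 => (X i : MvPolynomial (Fin 2) ℤ) ^ p) i))
      = ![z ^ p, w ^ p] := by
    funext i
    fin_cases i <;> simp
  rw [harg] at h
  exact h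

private lemma frob_O_iter {O : Type*} [CommRing O] (p : ℕ) [Fact p.Prime]
    (S : MvPolynomial (Fin 2) ℤ) (z w : O) :
    ∀ j : ℕ, (p : O) ∣ aeval ![z ^ p ^ j, w ^ p ^ j] S - (aeval ![z, w] S) ^ p ^ j := by
  intro j
  induction j with
  | zero => simp
  | succ j ih =>
    have h1 : (p : O) ∣ aeval ![(z ^ p ^ j) ^ p, (w ^ p ^ j) ^ p] S
        - (aeval ![z ^ p ^ j, w ^ p ^ j] S) ^ p := frob_O p S _ _
    have h2 : (p : O) ∣ (aeval ![z ^ p ^ j, w ^ p ^ j] S) ^ p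
        - ((aeval ![z, w] S) ^ p ^ j) ^ p := by
      have := dvd_sub_pow_of_dvd_sub ih 1
      simp only [pow_one] at this
      exact dvd_trans (dvd_pow_self (p : O) two_ne_zero) this
    have h3 : aeval ![z ^ p ^ (j + 1), w ^ p ^ (j + 1)] S - (aeval ![z, w] S) ^ p ^ (j + 1)
        = (aeval ![(z ^ p ^ j) ^ p, (w ^ p ^ j) ^ p] S - (aeval ![z ^ p ^ j, w ^ p ^ j] S) ^ p)
          + ((aeval ![z ^ p ^ j, w ^ p ^ j] S) ^ p - ((aeval ![z, w] S) ^ p ^ j) ^ p) := by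
      rw [show ∀ x : O, x ^ p ^ (j + 1) = (x ^ p ^ j) ^ p from fun x => by
        rw [← pow_mul, ← pow_succ]]
      ring
    rw [h3]
    exact dvd_add h1 h2

/-- Witt-vector summation formula for the first `e+1` Teichmüller digits in the valuation
ring `O` of a finite extension `F/ℚ_p` with ramification index `e`, residue field `k` of
cardinality `p^f`, and uniformizer `ϖ`.  The ring `O` is presented abstractly: `ρ : O → k`
is the residue map (with kernel `(ϖ)`), `T : k → O` is the Teichmüller lift (the
multiplicative section satisfying `T x ^ (p^f) = T x`), `p = u·ϖ^e` with `u` a unit, and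
`a, b ∈ O` have Teichmüller digit sequences `da, db`.  Then
`a + b ≡ Σ_{i<e} [aᵢ+bᵢ]ϖ^i + [a_e + b_e + u₀·S(a₀,b₀)^(p^(f-1))]·ϖ^e (mod ϖ^(e+1))`,
where `u₀ = ρ u` and `S(x,y) = (x^p + y^p − (x+y)^p)/p`. -/
theorem stmt_3 (p f e : ℕ) [Fact p.Prime] (hf : 0 < f) (he : 0 < e)
    (O : Type) [CommRing O] [IsDomain O]
    (k : Type) [Field k] [Fintype k] (hk : Fintype.card k = p ^ f)
    (ρ : O →+* k) (T : k → O)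
    (hTsec : ∀ x, ρ (T x) = x) (hTmul : ∀ x y, T (x * y) = T x * T y)
    (hTpow : ∀ x, T x ^ p ^ f = T x)
    (ϖ : O) (hker : ∀ x : O, ρ x = 0 ↔ x ∈ Ideal.span {ϖ})
    (u : O) (hu : IsUnit u) (hue : (p : O) = u * ϖ ^ e)
    (S : MvPolynomial (Fin 2) ℤ)
    (hS : (p : MvPolynomial (Fin 2) ℤ) * S = X 0 ^ p + X 1 ^ p - (X 0 + X 1) ^ p)
    (a b : O) (da db : ℕ → k)
    (ha : ∀ m : ℕ, a - ∑ i ∈ Finset.range m, T (da i) * ϖ ^ i ∈ Ideal.span {ϖ ^ m})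
    (hb : ∀ m : ℕ, b - ∑ i ∈ Finset.range m, T (db i) * ϖ ^ i ∈ Ideal.span {ϖ ^ m}) :
    a + b -
        ((∑ i ∈ Finset.range e, T (da i + db i) * ϖ ^ i) +
          T (da e + db e + ρ u * (MvPolynomial.aeval ![da 0, db 0] S) ^ p ^ (f - 1)) * ϖ ^ e)
      ∈ Ideal.span {ϖ ^ (e + 1)} := by
  have prime : p.Prime := Fact.out
  have hdvd1 : ∀ z : O, ρ z = 0 → ϖ ∣ z := fun z hz =>
    Ideal.mem_span_singleton.mp ((hker z).mp hz)
  have hpe : ϖ ^ e ∣ (p : O) := ⟨u, by rw [hue]; ring⟩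
  have hp2 : ϖ ^ (e + 1) ∣ (p : O) ^ 2 := by
    refine dvd_trans (pow_dvd_pow ϖ (show e + 1 ≤ 2 * e by omega)) ?_
    rw [two_mul, pow_add, pow_two]
    exact mul_dvd_mul hpe hpe
  have hqpos : 0 < p ^ f := pow_pos prime.pos f
  have hSval : ∀ z w : O, (p : O) * (aeval ![z, w] S) = z ^ p + w ^ p - (z + w) ^ p := by
    intro z w
    have h := congrArg (aeval ![z, w]) hS
    simpa using h
  -- key single-digit lemma
  have key : ∀ x y : k, ϖ ^ (e + 1) ∣
      (T x + T y - T (x + y) - (p : O) * (aeval ![T x, T y] S) ^ p ^ (f - 1)) := by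
    intro x y
    set c : O := T x + T y with hc
    set s₁ : O := aeval ![T x, T y] S with hs₁
    set s : O := s₁ ^ p ^ (f - 1) with hs
    have step : ∀ j : ℕ, (p : O) ^ 2 ∣
        c ^ p ^ (j + 1) - (T x ^ p ^ (j + 1) + T y ^ p ^ (j + 1) - (p : O) * s₁ ^ p ^ j) := by
      intro j
      induction j with
      | zero =>
        have h0 := hSval (T x) (T y)
        rw [← hs₁, ← hc] at h0
        have hz : c ^ p ^ (0 + 1) - (T x ^ p ^ (0 + 1) + T y ^ p ^ (0 + 1)
            - (p : O) * s₁ ^ p ^ 0) = 0 := by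
          simp only [zero_add, pow_one, pow_zero]
          rw [h0]
          ring
        rw [hz]
        exact dvd_zero _
      | succ j ih =>
        have hA : (p : O) ∣
            c ^ p ^ (j + 1) - (T x ^ p ^ (j + 1) + T y ^ p ^ (j + 1) - (p : O) * s₁ ^ p ^ j) :=
          dvd_trans (dvd_pow_self (p : O) two_ne_zero) ih
        have h1 : (p : O) ^ 2 ∣ (c ^ p ^ (j + 1)) ^ p
            - (T x ^ p ^ (j + 1) + T y ^ p ^ (j + 1) - (p : O) * s₁ ^ p ^ j) ^ p := by
          have := dvd_sub_pow_of_dvd_sub hA 1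
          simpa [pow_one] using this
        have h2 : (p : O) ^ 2 ∣
            (T x ^ p ^ (j + 1) + T y ^ p ^ (j + 1) - (p : O) * s₁ ^ p ^ j) ^ p
            - (T x ^ p ^ (j + 1) + T y ^ p ^ (j + 1)) ^ p := by
          have hd : (p : O) ∣ (T x ^ p ^ (j + 1) + T y ^ p ^ (j + 1) - (p : O) * s₁ ^ p ^ j)
              - (T x ^ p ^ (j + 1) + T y ^ p ^ (j + 1)) := ⟨-(s₁ ^ p ^ j), by ring⟩
          have := dvd_sub_pow_of_dvd_sub hd 1
          simpa [pow_one] using this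
        have h3 : (T x ^ p ^ (j + 1) + T y ^ p ^ (j + 1)) ^ p
            = (T x ^ p ^ (j + 1)) ^ p + (T y ^ p ^ (j + 1)) ^ p
              - (p : O) * aeval ![T x ^ p ^ (j + 1), T y ^ p ^ (j + 1)] S := by
          have h := hSval (T x ^ p ^ (j + 1)) (T y ^ p ^ (j + 1))
          linear_combination h
        have h4 : (p : O) ^ 2 ∣ (p : O) * aeval ![T x ^ p ^ (j + 1), T y ^ p ^ (j + 1)] S
            - (p : O) * s₁ ^ p ^ (j + 1) := by
          have hfo : (p : O) ∣ aeval ![T x ^ p ^ (j + 1), T y ^ p ^ (j + 1)] S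
              - s₁ ^ p ^ (j + 1) := by
            simpa [hs₁] using frob_O_iter p S (T x) (T y) (j + 1)
          have := mul_dvd_mul_left (p : O) hfo
          rw [mul_sub] at this
          simpa [pow_two] using this
        obtain ⟨r1, hr1⟩ := h1
        obtain ⟨r2, hr2⟩ := h2
        obtain ⟨r4, hr4⟩ := h4
        refine ⟨r1 + r2 - r4, ?_⟩
        rw [show p ^ (j + 1 + 1) = p ^ (j + 1) * p from pow_succ p (j + 1)]
        simp only [pow_mul]
        linear_combination hr1 + hr2 + h3 - hr4
    have hKf : (p : O) ^ 2 ∣ c ^ p ^ f - (T x + T y - (p : O) * s) := by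
      have h := step (f - 1)
      rw [show f - 1 + 1 = f from Nat.succ_pred_eq_of_pos hf, hTpow x, hTpow y, ← hs] at h
      exact h
    have hδρ : ρ (c - T (x + y)) = 0 := by
      rw [hc]
      simp [hTsec]
    have hδ1 : ϖ ∣ c - T (x + y) := hdvd1 _ hδρ
    have core : ∀ m : ℕ, 1 ≤ m → ϖ ^ m ∣ c - T (x + y) →
        ϖ ^ (min (e + 1) (min (2 * m) (e + m))) ∣ (c - T (x + y)) - (p : O) * s := by
      intro m hm hdm
      have h1 : ϖ ^ (e + 1) ∣ (c - (p : O) * s) - c ^ p ^ f := by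
        have heq : (c - (p : O) * s) - c ^ p ^ f
            = -(c ^ p ^ f - (T x + T y - (p : O) * s)) := by
          rw [hc]; ring
        rw [heq]
        exact dvd_neg.mpr (hp2.trans hKf)
      obtain ⟨B, hB⟩ := binom2 (T (x + y)) (c - T (x + y)) (p ^ f - 1)
      rw [show p ^ f - 1 + 1 = p ^ f from Nat.succ_pred_eq_of_pos hqpos,
        show T (x + y) + (c - T (x + y)) = c from by ring, hTpow] at hB
      have h2 : ϖ ^ min (2 * m) (e + m) ∣ c ^ p ^ f - T (x + y) := by
        have hterm1 : ϖ ^ (e + m) ∣ ((p ^ f : ℕ) : O) * T (x + y) ^ (p ^ f - 1)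
            * (c - T (x + y)) := by
          rw [pow_add]
          refine mul_dvd_mul (Dvd.dvd.mul_right ?_ _) hdm
          rw [Nat.cast_pow]
          exact hpe.trans (dvd_pow_self (p : O) (by omega))
        have hterm2 : ϖ ^ (2 * m) ∣ (c - T (x + y)) ^ 2 * B := by
          have h := pow_dvd_pow_of_dvd hdm 2
          rw [← pow_mul, mul_comm m 2] at h
          exact h.mul_right B
        have heq2 : c ^ p ^ f - T (x + y) = ((p ^ f : ℕ) : O) * T (x + y) ^ (p ^ f - 1)
            * (c - T (x + y)) + (c - T (x + y)) ^ 2 * B := by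
          linear_combination hB
        rw [heq2]
        exact dvd_add (dvd_trans (pow_dvd_pow ϖ (min_le_right _ _)) hterm1)
          (dvd_trans (pow_dvd_pow ϖ (min_le_left _ _)) hterm2)
      have hsplit : (c - T (x + y)) - (p : O) * s
          = ((c - (p : O) * s) - c ^ p ^ f) + (c ^ p ^ f - T (x + y)) := by ring
      rw [hsplit]
      exact dvd_add ((pow_dvd_pow ϖ (min_le_left _ _)).trans h1)
        ((pow_dvd_pow ϖ (min_le_right _ _)).trans h2)
    have boot : ∀ j : ℕ, ϖ ^ min e (2 ^ j) ∣ c - T (x + y) := by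
      intro j
      induction j with
      | zero =>
        have hm : min e (2 ^ 0) = 1 := by
          simp only [pow_zero]
          omega
        rw [hm, pow_one]
        exact hδ1
      | succ j ih =>
        have h2j : (1 : ℕ) ≤ 2 ^ j := Nat.one_le_two_pow
        have hm1 : 1 ≤ min e (2 ^ j) := by omega
        have hco := core _ hm1 ih
        have h2e : ϖ ^ min e (2 ^ (j + 1)) ∣ (p : O) * s :=
          (pow_dvd_pow ϖ (min_le_left _ _)).trans (hpe.mul_right s)
        have hle : min e (2 ^ (j + 1)) ≤
            min (e + 1) (min (2 * min e (2 ^ j)) (e + min e (2 ^ j))) := by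
          have h2s : (2 : ℕ) ^ (j + 1) = 2 * 2 ^ j := by rw [pow_succ]; ring
          omega
        have hd := (pow_dvd_pow ϖ hle).trans hco
        have hsplit : c - T (x + y) = ((c - T (x + y)) - (p : O) * s) + (p : O) * s := by ring
        rw [hsplit]
        exact dvd_add hd h2e
    have hδe : ϖ ^ e ∣ c - T (x + y) := by
      have h := boot e
      rw [show min e (2 ^ e) = e from by
        have : e < 2 ^ e := Nat.lt_two_pow_self
        omega] at h
      exact h
    have hfin := core e he hδe
    rw [show min (e + 1) (min (2 * e) (e + e)) = e + 1 from by omega] at hfin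
    exact hfin
  -- residue computation for aeval
  have hρs : ∀ x y : k, ρ (aeval ![T x, T y] S) = aeval ![x, y] S := by
    intro x y
    rw [map_aeval]
    have harg : (fun i => ρ (![T x, T y] i)) = ![x, y] := by
      funext i
      fin_cases i <;> simp [hTsec]
    rw [harg, aeval_def, ← coe_eval₂Hom]
    exact eval₂Hom_congr (RingHom.ext_int _ _) rfl rfl
  -- assembly
  rw [Ideal.mem_span_singleton]
  have hA := Ideal.mem_span_singleton.mp (ha (e + 1))
  have hB := Ideal.mem_span_singleton.mp (hb (e + 1))
  set E : k := da e + db e + ρ u * (aeval ![da 0, db 0] S) ^ p ^ (f - 1) with hE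
  set G : O := (∑ i ∈ Finset.range e, T (da i + db i) * ϖ ^ i) + T E * ϖ ^ e with hG
  set Sa : O := ∑ i ∈ Finset.range (e + 1), T (da i) * ϖ ^ i with hSa
  set Sb : O := ∑ i ∈ Finset.range (e + 1), T (db i) * ϖ ^ i with hSb
  have hsplit : a + b - G = (a - Sa) + (b - Sb) + (Sa + Sb - G) := by ring
  rw [hsplit]
  refine dvd_add (dvd_add hA hB) ?_
  -- abbreviations
  set s' : ℕ → O := fun i => (aeval ![T (da i), T (db i)] S) ^ p ^ (f - 1) with hs'
  have hsum1 : ϖ ^ (e + 1) ∣ ∑ i ∈ Finset.range e,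
      (T (da i) + T (db i) - T (da i + db i) - (p : O) * s' i) * ϖ ^ i :=
    Finset.dvd_sum fun i _ => (key (da i) (db i)).mul_right _
  have hsum2 : ϖ ^ (e + 1) ∣ ∑ i ∈ Finset.range (e - 1),
      (p : O) * s' (i + 1) * ϖ ^ (i + 1) := by
    refine Finset.dvd_sum fun i _ => ?_
    have h1 : ϖ ^ (e + 1) ∣ (p : O) * ϖ ^ (i + 1) := by
      rw [pow_succ]
      exact mul_dvd_mul hpe (dvd_pow_self ϖ (Nat.succ_ne_zero i))
    have h2 := h1.mul_right (s' (i + 1))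
    rwa [show (p : O) * ϖ ^ (i + 1) * s' (i + 1)
      = (p : O) * s' (i + 1) * ϖ ^ (i + 1) from by ring] at h2
  have h0 : ϖ ^ (e + 1) ∣ (p : O) * s' 0 + (T (da e) + T (db e) - T E) * ϖ ^ e := by
    have hres : ρ (u * s' 0 + T (da e) + T (db e) - T E) = 0 := by
      rw [hs']
      simp only [map_sub, map_add, map_mul, map_pow, hTsec, hρs, hE]
      ring
    obtain ⟨t, ht⟩ := hdvd1 _ hres
    refine ⟨t, ?_⟩
    have heq : (p : O) * s' 0 + (T (da e) + T (db e) - T E) * ϖ ^ e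
        = (u * s' 0 + T (da e) + T (db e) - T E) * ϖ ^ e := by
      rw [hue]; ring
    rw [heq, ht, pow_succ]
    ring
  have hfinal : Sa + Sb - G
      = (∑ i ∈ Finset.range e,
          (T (da i) + T (db i) - T (da i + db i) - (p : O) * s' i) * ϖ ^ i)
        + (∑ i ∈ Finset.range (e - 1), (p : O) * s' (i + 1) * ϖ ^ (i + 1))
        + ((p : O) * s' 0 + (T (da e) + T (db e) - T E) * ϖ ^ e) := by
    have h1 : Sa = (∑ i ∈ Finset.range e, T (da i) * ϖ ^ i) + T (da e) * ϖ ^ e :=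
      Finset.sum_range_succ _ e
    have h2 : Sb = (∑ i ∈ Finset.range e, T (db i) * ϖ ^ i) + T (db e) * ϖ ^ e :=
      Finset.sum_range_succ _ e
    have h3 : ∑ i ∈ Finset.range e, (p : O) * s' i * ϖ ^ i
        = (∑ i ∈ Finset.range (e - 1), (p : O) * s' (i + 1) * ϖ ^ (i + 1))
          + (p : O) * s' 0 * ϖ ^ 0 := by
      conv_lhs => rw [show e = (e - 1) + 1 from by omega]
      exact Finset.sum_range_succ' _ (e - 1)
    have h4 : ∑ i ∈ Finset.range e,
        (T (da i) + T (db i) - T (da i + db i) - (p : O) * s' i) * ϖ ^ i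
        = ((∑ i ∈ Finset.range e, T (da i) * ϖ ^ i)
          + (∑ i ∈ Finset.range e, T (db i) * ϖ ^ i)
          - (∑ i ∈ Finset.range e, T (da i + db i) * ϖ ^ i))
          - ∑ i ∈ Finset.range e, (p : O) * s' i * ϖ ^ i := by
      rw [← Finset.sum_add_distrib, ← Finset.sum_sub_distrib, ← Finset.sum_sub_distrib]
      exact Finset.sum_congr rfl fun i _ => by ring
    rw [h1, h2, hG, h4, h3]
    ring
  rw [hfinal]
  exact dvd_add (dvd_add hsum1 hsum2) h0
end

section
/- For α, β ∈ ℤ/(q−1)ℤ ∪ {0} represented in base p by digit tuples (α_i), (β_i) ∈ {0,...,p−1}^f with indices in ℤ/fℤ, there exists a unique subset I(α,β) ⊆ ℤ/fℤ (the 'carry set') satisfying: α_i + β_i ≤ p−1 if i−1 ∉ I and i ∉ I; α_i + β_i ≤ p−2 if i−1 ∈ I and i ∉ I; α_i + β_i ≥ p if i−1 ∉ I and i ∈ I; α_i + β_i ≥ p−1 if i−1 ∈ I and i ∈ I; and I = ∅ when α_i + β_i = p−1 for all i. -/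
/-- The `i`-th base-`p` digit of `a`, with the digit positions indexed cyclically by
`ℤ/fℤ`. -/
def digitZ (p f : ℕ) (a : ℕ) (i : ZMod f) : ℕ := a / p ^ i.val % p

/-- Addition in the exponent monoid `Ñ = {0} ∪ ℤ/(q−1)ℤ`, computed on the canonical
representatives in `{0, …, q−1}`. -/
def nadd (q a b : ℕ) : ℕ := if a + b = 0 then 0 else (a + b - 1) % (q - 1) + 1

/-- The defining conditions for the carry set `I(α,β) ⊆ ℤ/fℤ` of the base-`p` addition
of `α` and `β` in `Ñ` (Lemma on carry sets). -/
def CarrySetSpec (p f : ℕ) (a b : ℕ) (I : Finset (ZMod f)) : Prop :=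
  (∀ i : ZMod f, i - 1 ∉ I → i ∉ I → digitZ p f a i + digitZ p f b i ≤ p - 1) ∧
  (∀ i : ZMod f, i - 1 ∈ I → i ∉ I → digitZ p f a i + digitZ p f b i ≤ p - 2) ∧
  (∀ i : ZMod f, i - 1 ∉ I → i ∈ I → p ≤ digitZ p f a i + digitZ p f b i) ∧
  (∀ i : ZMod f, i - 1 ∈ I → i ∈ I → p - 1 ≤ digitZ p f a i + digitZ p f b i) ∧
  ((∀ i : ZMod f, digitZ p f a i + digitZ p f b i = p - 1) → I = ∅)


open Classical in
theorem carry_aux (p f : ℕ) (hp2 : 2 ≤ p) [NeZero f] (s : ZMod f → ℕ) :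
    ∃! I : Finset (ZMod f),
      (∀ i : ZMod f, i - 1 ∉ I → i ∉ I → s i ≤ p - 1) ∧
      (∀ i : ZMod f, i - 1 ∈ I → i ∉ I → s i ≤ p - 2) ∧
      (∀ i : ZMod f, i - 1 ∉ I → i ∈ I → p ≤ s i) ∧
      (∀ i : ZMod f, i - 1 ∈ I → i ∈ I → p - 1 ≤ s i) ∧
      ((∀ i : ZMod f, s i = p - 1) → I = ∅) := by
  classical
  have hf : 0 < f := Nat.pos_of_ne_zero (NeZero.ne f)
  set P : ZMod f → Prop := fun i =>
    ∃ k, k < f ∧ p ≤ s (i - (k : ZMod f)) ∧ ∀ j < k, s (i - (j : ZMod f)) = p - 1 with hPdef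
  have hcast : ∀ (i : ZMod f) (j : ℕ), i - ((j + 1 : ℕ) : ZMod f) = i - 1 - (j : ZMod f) := by
    intro i j; push_cast; ring
  -- extension: if s i = p-1 and P (i-1) then P i
  have hext : ∀ i, s i = p - 1 → P (i - 1) → P i := by
    rintro i hsi ⟨k, hk, hk1, hk2⟩
    rcases eq_or_lt_of_le (Nat.succ_le_of_lt hk) with he | hlt
    · exfalso
      have he' : k + 1 = f := he
      have h0 : i - ((k + 1 : ℕ) : ZMod f) = i := by
        rw [he', ZMod.natCast_self, sub_zero]
      rw [hcast] at h0
      rw [h0] at hk1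
      omega
    · refine ⟨k + 1, hlt, ?_, ?_⟩
      · rw [hcast]; exact hk1
      · intro j hj
        cases j with
        | zero => simpa using hsi
        | succ j' => rw [hcast]; exact hk2 j' (by omega)
  -- descent: if P i then s i ≥ p, or s i = p-1 and P (i-1)
  have hdes : ∀ i, P i → p ≤ s i ∨ (s i = p - 1 ∧ P (i - 1)) := by
    rintro i ⟨k, hk, hk1, hk2⟩
    cases k with
    | zero => left; simpa using hk1
    | succ k' =>
      right
      constructor
      · simpa using hk2 0 (by omega)
      · refine ⟨k', by omega, ?_, ?_⟩
        · rw [← hcast]; exact hk1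
        · intro j hj; rw [← hcast]; exact hk2 (j + 1) (by omega)
  -- if i not in P then s i < p
  have hnot : ∀ i, ¬ P i → s i < p := by
    intro i hi
    by_contra h
    exact hi ⟨0, hf, by simpa using (by omega : p ≤ s i), by omega⟩
  refine ⟨Finset.univ.filter P, ⟨?_, ?_, ?_, ?_, ?_⟩, ?_⟩
  · intro i _ hi
    simp only [Finset.mem_filter, Finset.mem_univ, true_and] at hi
    have := hnot i hi; omega
  · intro i hi1 hi
    simp only [Finset.mem_filter, Finset.mem_univ, true_and] at hi1 hi
    have h1 := hnot i hi
    have h2 : s i ≠ p - 1 := fun h => hi (hext i h hi1)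
    omega
  · intro i hi1 hi
    simp only [Finset.mem_filter, Finset.mem_univ, true_and] at hi1 hi
    rcases hdes i hi with h | ⟨_, h⟩
    · exact h
    · exact absurd h hi1
  · intro i _ hi
    simp only [Finset.mem_filter, Finset.mem_univ, true_and] at hi
    rcases hdes i hi with h | ⟨h, _⟩ <;> omega
  · intro hall
    ext i
    simp only [Finset.mem_filter, Finset.mem_univ, true_and, Finset.notMem_empty, iff_false]
    rintro ⟨k, hk, hk1, _⟩
    have := hall (i - (k : ZMod f))
    omega
  · -- uniqueness
    rintro J ⟨c1, c2, c3, c4, c5⟩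
    ext i
    simp only [Finset.mem_filter, Finset.mem_univ, true_and]
    constructor
    ·
      -- i ∈ J → P i
      intro hiJ
      by_contra hiP
      -- helper: x ∈ J, ¬ P x → s x = p - 1 ∧ x - 1 ∈ J ∧ ¬ P (x-1)
      have step : ∀ x, x ∈ J → ¬ P x → s x = p - 1 ∧ x - 1 ∈ J ∧ ¬ P (x - 1) := by
        intro x hxJ hxP
        have hlt := hnot x hxP
        have hx1J : x - 1 ∈ J := by
          by_contra h
          have := c3 x h hxJ; omega
        have hsx : s x = p - 1 := by
          have := c4 x hx1J hxJ; omega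
        exact ⟨hsx, hx1J, fun h => hxP (hext x hsx h)⟩
      have chain : ∀ j : ℕ, (i - (j : ZMod f)) ∈ J ∧ ¬ P (i - (j : ZMod f)) ∧
          s (i - (j : ZMod f)) = p - 1 := by
        intro j
        induction j with
        | zero =>
          simp only [Nat.cast_zero, sub_zero]
          obtain ⟨h1, h2, h3⟩ := step i hiJ hiP
          exact ⟨hiJ, hiP, h1⟩
        | succ j' ih =>
          obtain ⟨h1, h2, _⟩ := ih
          obtain ⟨_, h4, h5⟩ := step _ h1 h2
          obtain ⟨h6, _, _⟩ := step _ h4 h5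
          have hc : i - ((j' + 1 : ℕ) : ZMod f) = i - (j' : ZMod f) - 1 := by
            push_cast; ring
          rw [hc]
          exact ⟨h4, h5, h6⟩
      have hall : ∀ x : ZMod f, s x = p - 1 := by
        intro x
        have hx : i - (((i - x).val : ℕ) : ZMod f) = x := by
          rw [ZMod.natCast_val, ZMod.cast_id]
          ring
        have := (chain (i - x).val).2.2
        rwa [hx] at this
      have := c5 hall
      rw [this] at hiJ
      exact absurd hiJ (Finset.notMem_empty i)
    · -- P i → i ∈ J
      intro hiP
      obtain ⟨k, hk, hk1, hk2⟩ := hiP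
      induction k generalizing i with
      | zero =>
        simp only [Nat.cast_zero, sub_zero] at hk1
        by_contra h
        by_cases h1 : i - 1 ∈ J
        · have := c2 i h1 h; omega
        · have := c1 i h1 h; omega
      | succ k' ih =>
        have hsi : s i = p - 1 := by simpa using hk2 0 (by omega)
        have hi1 : i - 1 ∈ J := by
          refine ih (i - 1) (by omega) ?_ ?_
          · rw [← hcast]; exact hk1
          · intro j hj; rw [← hcast]; exact hk2 (j + 1) (by omega)
        by_contra h
        have := c2 i hi1 h
        omega


/-- Existence and uniqueness of the carry set `I(α,β) ⊆ ℤ/fℤ` for `α, β ∈ Ñ`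
(given by their canonical representatives `a, b ∈ {0, …, q−1}`). -/
theorem stmt_4 (p f q : ℕ) (hp : p.Prime) (hodd : Odd p) [NeZero f] (hq : q = p ^ f)
    (a b : ℕ) (ha : a ≤ q - 1) (hb : b ≤ q - 1) :
    ∃! I : Finset (ZMod f), CarrySetSpec p f a b I := by
  exact carry_aux p f hp.two_le (fun i => digitZ p f a i + digitZ p f b i)
end

section
/- The carry sets satisfy the cocycle-type identity I(α,γ) ∪ I(α+γ, β) = I(α,β) ∪ I(α+β, γ) for all α, β, γ ∈ Ñ; in particular I(α+γ, β) ⊆ I(α,β) ∪ I(α+β, γ). Moreover, this holds even as multisets. -/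
lemma sum_digit_extract (p : ℕ) (hp : 1 < p) :
    ∀ (j f : ℕ) (g : ℕ → ℕ), (∀ i, g i < p) → j < f →
      (∑ i ∈ Finset.range f, g i * p ^ i) / p ^ j % p = g j := by
  intro j
  induction j with
  | zero =>
    intro f g hg hj
    obtain ⟨f', rfl⟩ : ∃ f', f = f' + 1 := ⟨f - 1, by omega⟩
    rw [Finset.sum_range_succ']
    have hrw : ∀ i ∈ Finset.range f', g (i + 1) * p ^ (i + 1) = (g (i + 1) * p ^ i) * p := by
      intro i _; ring
    rw [Finset.sum_congr rfl hrw, ← Finset.sum_mul]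
    simp only [pow_zero, mul_one, Nat.div_one]
    rw [add_comm, Nat.add_mul_mod_self_right, Nat.mod_eq_of_lt (hg 0)]
  | succ j ih =>
    intro f g hg hj
    obtain ⟨f', rfl⟩ : ∃ f', f = f' + 1 := ⟨f - 1, by omega⟩
    rw [Finset.sum_range_succ']
    have hrw : ∀ i ∈ Finset.range f', g (i + 1) * p ^ (i + 1) = p * (g (i + 1) * p ^ i) := by
      intro i _; ring
    rw [Finset.sum_congr rfl hrw, ← Finset.mul_sum]
    simp only [pow_zero, mul_one]
    rw [pow_succ', ← Nat.div_div_eq_div_mul]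
    have hdiv : (p * (∑ i ∈ Finset.range f', g (i + 1) * p ^ i) + g 0) / p
        = ∑ i ∈ Finset.range f', g (i + 1) * p ^ i := by
      rw [Nat.mul_add_div (by omega), Nat.div_eq_of_lt (hg 0), add_zero]
    rw [hdiv]
    exact ih f' (fun i => g (i + 1)) (fun i => hg (i + 1)) (by omega)

lemma sum_digits_self (p : ℕ) (hp : 1 < p) :
    ∀ (f n : ℕ), n < p ^ f → ∑ i ∈ Finset.range f, (n / p ^ i % p) * p ^ i = n := by
  intro f
  induction f with
  | zero => intro n hn; simp at hn ⊢; omega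
  | succ f ih =>
    intro n hn
    rw [Finset.sum_range_succ']
    have hrw : ∀ i ∈ Finset.range f, n / p ^ (i + 1) % p * p ^ (i + 1)
        = p * ((n / p) / p ^ i % p * p ^ i) := by
      intro i _
      rw [pow_succ', ← Nat.div_div_eq_div_mul]
      ring
    have hnp : n / p < p ^ f := by
      rw [Nat.div_lt_iff_lt_mul (by omega)]
      calc n < p ^ (f + 1) := hn
        _ = p ^ f * p := pow_succ p f
    rw [Finset.sum_congr rfl hrw, ← Finset.mul_sum, ih (n / p) hnp]
    simp only [pow_zero, mul_one, Nat.div_one]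
    have := Nat.div_add_mod n p
    omega

lemma sum_lt_pow (p : ℕ) (hp : 1 ≤ p) (g : ℕ → ℕ) (hg : ∀ i, g i < p) :
    ∀ f, ∑ i ∈ Finset.range f, g i * p ^ i < p ^ f := by
  obtain ⟨p', rfl⟩ : ∃ p', p = p' + 1 := ⟨p - 1, by omega⟩
  intro f
  induction f with
  | zero => simp
  | succ f ih =>
    rw [Finset.sum_range_succ, pow_succ]
    have h1 : g f * (p' + 1) ^ f ≤ p' * (p' + 1) ^ f :=
      Nat.mul_le_mul_right _ (by have := hg f; omega)
    calc (∑ i ∈ Finset.range f, g i * (p' + 1) ^ i) + g f * (p' + 1) ^ f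
        < (p' + 1) ^ f + p' * (p' + 1) ^ f := Nat.add_lt_add_of_lt_of_le ih h1
      _ = (p' + 1) ^ f * (p' + 1) := by ring

lemma pow_congr_mod {M : Type*} [Monoid M] (x : M) {f : ℕ} (hf : x ^ f = 1)
    {m n : ℕ} (h : m % f = n % f) : x ^ m = x ^ n := by
  have key : ∀ k, x ^ k = x ^ (k % f) := by
    intro k
    conv_lhs => rw [← Nat.mod_add_div k f, pow_add, pow_mul, hf, one_pow, mul_one]
  rw [key m, key n, h]

lemma sum_range_zmod {M : Type*} [AddCommMonoid M] {f : ℕ} [NeZero f] (G : ZMod f → ℕ → M) :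
    ∑ i ∈ Finset.range f, G ↑i i = ∑ j : ZMod f, G j j.val := by
  refine Finset.sum_nbij' (fun i => (i : ZMod f)) (fun j => j.val)
    (fun a _ => Finset.mem_univ _) (fun j _ => Finset.mem_range.mpr (ZMod.val_lt j))
    (fun a ha => ZMod.val_cast_of_lt (Finset.mem_range.mp ha))
    (fun j _ => ZMod.natCast_rightInverse j) (fun a ha => ?_)
  rw [ZMod.val_cast_of_lt (Finset.mem_range.mp ha)]

lemma cancel_key (p : ℕ) (hp3 : 3 ≤ p) (x y x' y' : ℕ) (hx' : x' ≤ 2) (hy' : y' ≤ 2)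
    (h : p * x + y' = p * y + x') : x = y := by
  rcases Nat.lt_trichotomy x y with hlt | heq | hgt
  · have h2 : p * (x + 1) ≤ p * y := Nat.mul_le_mul_left p hlt
    rw [mul_add, mul_one] at h2
    linarith
  · exact heq
  · have h2 : p * (y + 1) ≤ p * x := Nat.mul_le_mul_left p hgt
    rw [mul_add, mul_one] at h2
    linarith

def rep (q s : ℕ) : ℕ := if s = 0 then 0 else (s - 1) % (q - 1) + 1

lemma nadd_eq_rep (q a b : ℕ) : nadd q a b = rep q (a + b) := rfl

lemma rep_modeq (q s : ℕ) : rep q s ≡ s [MOD q - 1] := by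
  unfold rep
  split
  · rename_i hs
    rw [hs]
  · rename_i hs
    calc (s - 1) % (q - 1) + 1 ≡ (s - 1) + 1 [MOD q - 1] :=
        Nat.ModEq.add_right 1 (Nat.mod_modEq _ _)
      _ = s := by omega

lemma rep_eq_zero_iff (q s : ℕ) : rep q s = 0 ↔ s = 0 := by
  unfold rep; split <;> omega

lemma rep_congr (q : ℕ) {x y : ℕ} (h : x ≡ y [MOD q - 1]) (h0 : x = 0 ↔ y = 0) :
    rep q x = rep q y := by
  unfold rep
  by_cases hx : x = 0
  · simp [hx, h0.mp hx]
  · have hy : y ≠ 0 := fun hy => hx (h0.mpr hy)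
    simp only [if_neg hx, if_neg hy]
    have h1 : x - 1 ≡ y - 1 [MOD q - 1] := by
      refine Nat.ModEq.add_right_cancel' 1 ?_
      rwa [Nat.sub_add_cancel (by omega), Nat.sub_add_cancel (by omega)]
    exact congrArg (· + 1) h1

lemma nadd_nadd (q x y z : ℕ) : nadd q (nadd q x y) z = rep q (x + y + z) := by
  rw [nadd_eq_rep, nadd_eq_rep]
  refine rep_congr q ?_ ?_
  · exact Nat.ModEq.add_right z (rep_modeq q (x + y))
  · have := rep_eq_zero_iff q (x + y)
    omega
    
lemma nadd_le (q a b : ℕ) (hq : 2 ≤ q) : nadd q a b ≤ q - 1 := by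
  unfold nadd
  split
  · omega
  · have : (a + b - 1) % (q - 1) < q - 1 := Nat.mod_lt _ (by omega)
    omega

section KeyA
variable {R : Type}

lemma keyA (p f q : ℕ) (hp3 : 3 ≤ p) [NeZero f] (hq : q = p ^ f)
    (a c : ℕ) (ha : a ≤ q - 1) (hc : c ≤ q - 1)
    (I : Finset (ZMod f)) (h : CarrySetSpec p f a c I) :
    ∀ i : ZMod f, digitZ p f (nadd q a c) i + p * (if i ∈ I then 1 else 0)
      = digitZ p f a i + digitZ p f c i + (if i - 1 ∈ I then 1 else 0) := by
  obtain ⟨h1, h2, h3, h4, h5⟩ := h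
  have hf : 0 < f := Nat.pos_of_ne_zero (NeZero.ne f)
  have hppos : 0 < p := by omega
  have hpf1 : 1 ≤ p ^ f := Nat.one_le_pow _ _ hppos
  have hple : p ≤ p ^ f := Nat.le_self_pow (by omega) p
  have hq3 : 3 ≤ q := by omega
  set χ : ZMod f → ℕ := fun i => if i ∈ I then 1 else 0 with hχ
  set s : ZMod f → ℕ := fun i => digitZ p f a i + digitZ p f c i with hs
  have hχmem : ∀ i, i ∈ I → χ i = 1 := fun i hi => by simp [hχ, hi]
  have hχnot : ∀ i, i ∉ I → χ i = 0 := fun i hi => by simp [hχ, hi]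
  have hdla : ∀ i : ZMod f, digitZ p f a i < p := fun i => Nat.mod_lt _ hppos
  have hdlc : ∀ i : ZMod f, digitZ p f c i < p := fun i => Nat.mod_lt _ hppos
  have hsle : ∀ i, s i ≤ 2 * p - 2 := fun i => by
    have := hdla i; have := hdlc i; simp only [hs]; omega
  set e : ZMod f → ℕ := fun i => s i + χ (i - 1) - p * χ i with he
  have fact1 : ∀ i, e i + p * χ i = s i + χ (i - 1) := by
    intro i
    have hle : p * χ i ≤ s i + χ (i - 1) := by
      by_cases hi : i ∈ I
      · by_cases hi' : i - 1 ∈ I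
        · have h4' := h4 i hi' hi
          rw [hχmem i hi, hχmem _ hi']
          simp only [hs]
          omega
        · have h3' := h3 i hi' hi
          rw [hχmem i hi, hχnot _ hi']
          simp only [hs]
          omega
      · rw [hχnot i hi, Nat.mul_zero]
        omega
    simp only [he]
    omega
  have fact2 : ∀ i, e i < p := by
    intro i
    have hf1 := fact1 i
    have hs2 := hsle i
    by_cases hi : i ∈ I <;> by_cases hi' : i - 1 ∈ I
    · rw [hχmem i hi, hχmem _ hi'] at hf1
      omega
    · rw [hχmem i hi, hχnot _ hi'] at hf1
      omega
    · rw [hχnot i hi, hχmem _ hi'] at hf1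
      have h2' := h2 i hi' hi
      simp only [hs] at hf1
      omega
    · rw [hχnot i hi, hχnot _ hi'] at hf1
      have h1' := h1 i hi' hi
      simp only [hs] at hf1
      omega
  set N : ℕ := ∑ i ∈ Finset.range f, e ↑i * p ^ i with hN
  have hdigN : ∀ i : ZMod f, digitZ p f N i = e i := by
    intro i
    have hext := sum_digit_extract p (by omega) i.val f (fun k => e ↑k)
      (fun k => fact2 _) (ZMod.val_lt i)
    have hcast : ((i.val : ℕ) : ZMod f) = i := ZMod.natCast_rightInverse i
    show N / p ^ i.val % p = e i
    rw [hN, hext]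
    exact congrArg e hcast
  have hNlt : N < p ^ f := by
    rw [hN]; exact sum_lt_pow p (by omega) (fun k => e ↑k) (fun k => fact2 _) f
  have hPf : ((p : ZMod (q - 1))) ^ f = 1 := by
    have h1' : ((p ^ f : ℕ) : ZMod (q - 1))
        = ((q - 1 : ℕ) : ZMod (q - 1)) + ((1 : ℕ) : ZMod (q - 1)) := by
      rw [← Nat.cast_add]
      congr 1
      omega
    rw [Nat.cast_pow] at h1'
    rw [h1', ZMod.natCast_self, Nat.cast_one, zero_add]
  have hdigit_cast : ∀ (n : ℕ) (k : ℕ), k < f → digitZ p f n (↑k : ZMod f) = n / p ^ k % p := by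
    intro n k hk
    show n / p ^ (ZMod.val (k : ZMod f)) % p = _
    rw [ZMod.val_cast_of_lt hk]
  have hA : ∀ n : ℕ, n ≤ q - 1 →
      ∑ i ∈ Finset.range f, (digitZ p f n ↑i : ZMod (q-1)) * (p : ZMod (q-1)) ^ i
        = (n : ZMod (q-1)) := by
    intro n hn
    have hn' : n < p ^ f := by omega
    calc ∑ i ∈ Finset.range f, (digitZ p f n ↑i : ZMod (q-1)) * (p : ZMod (q-1)) ^ i
        = ∑ i ∈ Finset.range f, ((n / p ^ i % p * p ^ i : ℕ) : ZMod (q-1)) := by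
          refine Finset.sum_congr rfl fun i hi => ?_
          rw [hdigit_cast n i (Finset.mem_range.mp hi)]
          push_cast
          ring
      _ = ((∑ i ∈ Finset.range f, n / p ^ i % p * p ^ i : ℕ) : ZMod (q-1)) := by
          rw [Nat.cast_sum]
      _ = (n : ZMod (q-1)) := by rw [sum_digits_self p (by omega) f n hn']
  have hshift : ∑ j : ZMod f, ((χ (j - 1) : ℕ) : ZMod (q-1)) * (p : ZMod (q-1)) ^ j.val
      = (p : ZMod (q-1)) * ∑ j : ZMod f, ((χ j : ℕ) : ZMod (q-1)) * (p : ZMod (q-1)) ^ j.val := by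
    rw [Finset.mul_sum]
    refine Fintype.sum_equiv (Equiv.subRight (1 : ZMod f)) _ _ fun j => ?_
    simp only [Equiv.subRight_apply]
    have h2' : ZMod.val j = ((j - 1).val + (1 : ZMod f).val) % f := by
      conv_lhs => rw [show j = (j - 1) + 1 by ring]
      exact ZMod.val_add _ _
    have hvv : (j.val) % f = ((j - 1).val + 1) % f := by
      calc j.val % f = j.val := Nat.mod_eq_of_lt (ZMod.val_lt j)
        _ = ((j - 1).val + (1 : ZMod f).val) % f := h2'
        _ = ((j - 1).val % f + (1 : ℕ) % f) % f := by
            rw [ZMod.val_one_eq_one_mod, Nat.mod_eq_of_lt (ZMod.val_lt (j - 1))]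
        _ = ((j - 1).val + 1) % f := (Nat.add_mod _ _ _).symm
    have hpow : (p : ZMod (q-1)) ^ j.val = (p : ZMod (q-1)) ^ ((j - 1).val + 1) :=
      pow_congr_mod _ hPf hvv
    rw [hpow, pow_succ']
    ring
  set P : ZMod (q-1) := (p : ZMod (q-1)) with hP
  set Sχ : ZMod (q-1) := ∑ j : ZMod f, ((χ j : ℕ) : ZMod (q-1)) * P ^ j.val with hSχ
  have h_e : ((N : ℕ) : ZMod (q-1)) = ∑ j : ZMod f, ((e j : ℕ) : ZMod (q-1)) * P ^ j.val := by
    rw [hN]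
    push_cast
    exact sum_range_zmod (fun j k => ((e j : ℕ) : ZMod (q-1)) * P ^ k)
  have h_s : ∑ j : ZMod f, ((s j : ℕ) : ZMod (q-1)) * P ^ j.val
      = ((a : ℕ) : ZMod (q-1)) + ((c : ℕ) : ZMod (q-1)) := by
    rw [← hA a ha, ← hA c hc, ← Finset.sum_add_distrib]
    rw [← sum_range_zmod (fun j k => ((s j : ℕ) : ZMod (q-1)) * P ^ k)]
    refine Finset.sum_congr rfl fun i _ => ?_
    simp only [hs]
    push_cast
    ring
  have hcomb : (∑ j : ZMod f, ((e j : ℕ) : ZMod (q-1)) * P ^ j.val) + P * Sχ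
      = (((a : ℕ) : ZMod (q-1)) + ((c : ℕ) : ZMod (q-1))) + P * Sχ := by
    conv_rhs => rw [← h_s, ← hshift]
    rw [hSχ, Finset.mul_sum, ← Finset.sum_add_distrib, ← Finset.sum_add_distrib]
    refine Finset.sum_congr rfl fun j _ => ?_
    have hcf : ((e j + p * χ j : ℕ) : ZMod (q-1)) = ((s j + χ (j - 1) : ℕ) : ZMod (q-1)) := by
      rw [fact1 j]
    push_cast at hcf
    rw [← hP] at hcf
    linear_combination hcf * P ^ j.val
  have hNac : ((N : ℕ) : ZMod (q-1)) = ((a + c : ℕ) : ZMod (q-1)) := by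
    have h' := add_right_cancel hcomb
    rw [h_e, h']
    push_cast
    ring
  have hmod : N ≡ a + c [MOD q - 1] := (ZMod.natCast_eq_natCast_iff _ _ _).mp hNac
  have hNn : nadd q a c = N := by
    by_cases hac : a + c = 0
    · have haz : a = 0 := by omega
      have hcz : c = 0 := by omega
      have hdz : ∀ i : ZMod f, s i = 0 := by
        intro i; simp [hs, digitZ, haz, hcz]
      have hIempty : I = ∅ := by
        by_contra hne
        obtain ⟨i, hi⟩ := Finset.nonempty_iff_ne_empty.mpr hne
        by_cases hi' : i - 1 ∈ I
        · have h4' := h4 i hi' hi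
          have h0 := hdz i
          simp only [hs] at h0
          omega
        · have h3' := h3 i hi' hi
          have h0 := hdz i
          simp only [hs] at h0
          omega
      have hNz : N = 0 := by
        rw [hN]
        refine Finset.sum_eq_zero fun i _ => ?_
        have he0 : e ↑i = 0 := by
          have hf1 := fact1 ↑i
          rw [hdz, hχnot _ (by simp [hIempty]), hχnot _ (by simp [hIempty])] at hf1
          omega
        rw [he0, Nat.zero_mul]
      rw [hNz]
      simp [nadd, hac]
    · have hNpos : N ≠ 0 := by
        intro hN0
        have he0 : ∀ j : ZMod f, e j = 0 := by
          intro j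
          have hsum0 : ∀ i ∈ Finset.range f, e ↑i * p ^ i = 0 :=
            Finset.sum_eq_zero_iff.mp (hN ▸ hN0)
          have h0 := hsum0 j.val (Finset.mem_range.mpr (ZMod.val_lt j))
          rw [ZMod.natCast_rightInverse j] at h0
          have hppow : 0 < p ^ j.val := Nat.pow_pos hppos
          rcases Nat.mul_eq_zero.mp h0 with h | h
          · exact h
          · omega
        by_cases hIe : I = ∅
        · have hdz : ∀ j : ZMod f, s j = 0 := by
            intro j
            have hf1 := fact1 j
            rw [hχnot _ (by simp [hIe]), hχnot _ (by simp [hIe]), he0 j] at hf1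
            omega
          have hdig0 : ∀ (n : ℕ), n ≤ q - 1 → (∀ j : ZMod f, digitZ p f n j = 0) → n = 0 := by
            intro n hn hd
            have hsa := sum_digits_self p (by omega) f n (by omega)
            rw [← hsa]
            refine Finset.sum_eq_zero fun i hi => ?_
            have h0 := hd ↑i
            rw [hdigit_cast n i (Finset.mem_range.mp hi)] at h0
            rw [h0, Nat.zero_mul]
          have haz : a = 0 := by
            refine hdig0 a ha fun j => ?_
            have := hdz j
            simp only [hs] at this
            omega
          have hcz : c = 0 := by
            refine hdig0 c hc fun j => ?_
            have := hdz j
            simp only [hs] at this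
            omega
          omega
        · obtain ⟨i₀, hi₀⟩ := Finset.nonempty_iff_ne_empty.mpr hIe
          have hstep : ∀ j : ZMod f, j ∈ I → j + 1 ∈ I := by
            intro j hj
            by_contra hj1
            have hf1 := fact1 (j + 1)
            have hrr : j + 1 - 1 = j := by ring
            rw [hχnot _ hj1, hrr, hχmem _ hj, he0 (j + 1)] at hf1
            omega
          have hall : ∀ j : ZMod f, j ∈ I := by
            have hk : ∀ k : ℕ, i₀ + (k : ZMod f) ∈ I := by
              intro k
              induction k with
              | zero => simpa using hi₀
              | succ k ihk =>
                have hst := hstep _ ihk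
                have hre : i₀ + (k : ZMod f) + 1 = i₀ + ((k + 1 : ℕ) : ZMod f) := by
                  push_cast; ring
                rwa [hre] at hst
            intro j
            have hkk := hk (j - i₀).val
            rw [ZMod.natCast_rightInverse (j - i₀)] at hkk
            have heq : i₀ + (j - i₀) = j := by ring
            rwa [heq] at hkk
          have hsall : ∀ j : ZMod f, digitZ p f a j + digitZ p f c j = p - 1 := by
            intro j
            have hf1 := fact1 j
            rw [hχmem _ (hall j), hχmem _ (hall (j - 1)), he0 j] at hf1
            have h4' := h4 j (hall _) (hall _)
            simp only [hs] at hf1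
            omega
          have hIe' := h5 hsall
          rw [hIe'] at hi₀
          simp at hi₀
      have hN1 : 1 ≤ N := by omega
      have hNle : N ≤ q - 1 := by omega
      have hr : nadd q a c = (a + c - 1) % (q - 1) + 1 := by unfold nadd; rw [if_neg hac]
      have hrle : (a + c - 1) % (q - 1) < q - 1 := Nat.mod_lt _ (by omega)
      have hmod' : N ≡ (a + c - 1) % (q - 1) + 1 [MOD q - 1] := by
        calc N ≡ a + c [MOD q - 1] := hmod
          _ = (a + c - 1) + 1 := by omega
          _ ≡ (a + c - 1) % (q - 1) + 1 [MOD q - 1] :=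
            (Nat.ModEq.add_right 1 (Nat.mod_modEq _ _)).symm
      have hcancel : N - 1 ≡ (a + c - 1) % (q - 1) [MOD q - 1] := by
        refine Nat.ModEq.add_right_cancel' 1 ?_
        rwa [Nat.sub_add_cancel hN1]
      have hfin : (N - 1) % (q - 1) = ((a + c - 1) % (q - 1)) % (q - 1) := hcancel
      rw [Nat.mod_eq_of_lt (by omega), Nat.mod_eq_of_lt hrle] at hfin
      rw [hr]
      omega
  intro i
  rw [hNn, hdigN i]
  have hf1 := fact1 i
  simp only [hχ, hs] at hf1
  exact hf1

end KeyA


/-- The cocycle-type identity for carry sets: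
`I(α,γ) ∪ I(α+γ, β) = I(α,β) ∪ I(α+β, γ)`, in particular
`I(α+γ, β) ⊆ I(α,β) ∪ I(α+β, γ)`; moreover the identity holds as multisets.
The carry sets are presented via the characterizing predicate `CarrySetSpec`. -/
theorem stmt_6 (p f q : ℕ) (hp : p.Prime) (hodd : Odd p) [NeZero f] (hq : q = p ^ f)
    (a b c : ℕ) (ha : a ≤ q - 1) (hb : b ≤ q - 1) (hc : c ≤ q - 1)
    (I₁ I₂ I₃ I₄ : Finset (ZMod f))
    (h1 : CarrySetSpec p f a c I₁) (h2 : CarrySetSpec p f (nadd q a c) b I₂)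
    (h3 : CarrySetSpec p f a b I₃) (h4 : CarrySetSpec p f (nadd q a b) c I₄) :
    I₁ ∪ I₂ = I₃ ∪ I₄ ∧ I₂ ⊆ I₃ ∪ I₄ ∧ I₁.val + I₂.val = I₃.val + I₄.val := by
  have hf : 0 < f := Nat.pos_of_ne_zero (NeZero.ne f)
  have hp3 : 3 ≤ p := by
    have h2' := hp.two_le
    have := Nat.odd_iff.mp hodd
    omega
  have hple : p ≤ p ^ f := Nat.le_self_pow (by omega) p
  have hq2 : 2 ≤ q := by omega
  have hnac : nadd q a c ≤ q - 1 := nadd_le q a c hq2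
  have hnab : nadd q a b ≤ q - 1 := nadd_le q a b hq2
  have k1 := keyA p f q hp3 hq a c ha hc I₁ h1
  have k2 := keyA p f q hp3 hq (nadd q a c) b hnac hb I₂ h2
  have k3 := keyA p f q hp3 hq a b ha hb I₃ h3
  have k4 := keyA p f q hp3 hq (nadd q a b) c hnab hc I₄ h4
  have hassoc : nadd q (nadd q a c) b = nadd q (nadd q a b) c := by
    rw [nadd_nadd, nadd_nadd]
    congr 1
    ring
  have hcount : ∀ i : ZMod f,
      ((if i ∈ I₁ then 1 else 0) + (if i ∈ I₂ then 1 else 0) : ℕ)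
        = (if i ∈ I₃ then 1 else 0) + (if i ∈ I₄ then 1 else 0) := by
    intro i
    have e1 := k1 i
    have e2 := k2 i
    have e3 := k3 i
    have e4 := k4 i
    rw [hassoc] at e2
    refine cancel_key p hp3 _ _
      ((if i - 1 ∈ I₁ then 1 else 0) + (if i - 1 ∈ I₂ then 1 else 0))
      ((if i - 1 ∈ I₃ then 1 else 0) + (if i - 1 ∈ I₄ then 1 else 0))
      (by split_ifs <;> omega) (by split_ifs <;> omega) ?_
    linarith [e1, e2, e3, e4]
  have hU : I₁ ∪ I₂ = I₃ ∪ I₄ := by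
    ext i
    have hci := hcount i
    simp only [Finset.mem_union]
    by_cases m1 : i ∈ I₁ <;> by_cases m2 : i ∈ I₂ <;> by_cases m3 : i ∈ I₃ <;>
      by_cases m4 : i ∈ I₄ <;> simp_all
  refine ⟨hU, by rw [← hU]; exact Finset.subset_union_right, ?_⟩
  refine Multiset.ext.mpr fun i => ?_
  have hcnt : ∀ J : Finset (ZMod f), Multiset.count i J.val = if i ∈ J then 1 else 0 := by
    intro J
    rw [Multiset.count_eq_of_nodup J.nodup]
    simp [Finset.mem_val]
  rw [Multiset.count_add, Multiset.count_add, hcnt, hcnt, hcnt, hcnt]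
  exact hcount i
end

section
/- Fix elements ε_1,...,ε_m ∈ Ñ (m ≥ 3). For any full rooted binary tree T with m leaves labeled by the ε_i, associate to each internal node v with children v', v'' the element τ_v = τ_{v'} + τ_{v''} and the carry set I_v = I(τ_{v'}, τ_{v''}). Then the multiset ⊔_{v internal} I_v is independent of the choice of T. -/
open Classical in
/-- The carry set `I(α,β)`: the (unique, under the standing hypotheses) set satisfying
`CarrySetSpec`. -/
noncomputable def carrySet (p f a b : ℕ) : Finset (ZMod f) :=
  if h : ∃ I : Finset (ZMod f), CarrySetSpec p f a b I then h.choose else ∅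

/-- The representative in `{1, …, q−1}` of a class in `ℤ/(q−1)ℤ ≅ Ñ∖{0}`. -/
def grpRep (q : ℕ) (x : ℤ) : ℕ := ((x - 1) % ((q : ℤ) - 1)).toNat + 1

/-- A full rooted binary tree with leaves labeled by elements of `Ñ` (canonical
representatives in `ℕ`). -/
inductive FBT where
  | leaf (v : ℕ) : FBT
  | node (l r : FBT) : FBT

/-- The multiset of leaf labels of a full binary tree. -/
def FBT.leaves : FBT → Multiset ℕ
  | .leaf v => {v}
  | .node l r => l.leaves + r.leaves

/-- The value `τ_v` at the root: the sum in `Ñ` of the leaf labels, computed according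
to the bracketing given by the tree. -/
def FBT.sum (q : ℕ) : FBT → ℕ
  | .leaf v => v
  | .node l r => nadd q (l.sum q) (r.sum q)

/-- The multiset `⊔_{v internal} I_v` of all carries performed when computing the sum
according to the tree. -/
noncomputable def FBT.carries (p f q : ℕ) : FBT → Multiset (ZMod f)
  | .leaf _ => 0
  | .node l r => l.carries p f q + r.carries p f q + (carrySet p f (l.sum q) (r.sum q)).val


namespace S7


def nred (q x : ℕ) : ℕ := if x = 0 then 0 else (x - 1) % (q - 1) + 1

lemma nadd_eq_nred (q a b : ℕ) : nadd q a b = nred q (a + b) := rfl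

lemma nred_eq_zero {q x : ℕ} : nred q x = 0 ↔ x = 0 := by
  unfold nred; split <;> simp_all

lemma nred_mod (q x : ℕ) : nred q x % (q - 1) = x % (q - 1) := by
  unfold nred; split
  · simp_all
  · have : ((x - 1) % (q-1) + 1) % (q-1) = ((x - 1) + 1) % (q-1) :=
      (Nat.mod_modEq (x-1) (q-1)).add_right 1
    rw [this]; congr 1; omega

lemma nred_congr {q x y : ℕ} (hmod : x % (q-1) = y % (q-1)) (h0 : x = 0 ↔ y = 0) :
    nred q x = nred q y := by
  unfold nred
  rcases Nat.eq_zero_or_pos x with hx | hx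
  · simp [hx, h0.mp hx]
  · have hy : 0 < y := by
      rcases Nat.eq_zero_or_pos y with h | h
      · exact absurd (h0.mpr h) (by omega)
      · exact h
    rw [if_neg (by omega), if_neg (by omega)]
    have key : (x - 1) % (q-1) = (y - 1) % (q-1) := by
      have h1 : (x : ℤ) % ((q-1 : ℕ) : ℤ) = (y : ℤ) % ((q-1 : ℕ) : ℤ) := by
        rw [← Int.natCast_mod, ← Int.natCast_mod, hmod]
      have h2 : ((x : ℤ) - 1) % ((q-1 : ℕ) : ℤ) = ((y : ℤ) - 1) % ((q-1 : ℕ) : ℤ) :=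
        Int.ModEq.sub_right 1 h1
      have h3 : ((x - 1 : ℕ) : ℤ) % ((q-1 : ℕ) : ℤ) = ((y - 1 : ℕ) : ℤ) % ((q-1 : ℕ) : ℤ) := by
        rw [Nat.cast_sub hx, Nat.cast_sub hy]; exact_mod_cast h2
      exact_mod_cast (by rw [← Int.natCast_mod, ← Int.natCast_mod] at h3; exact_mod_cast h3 : _)
    omega

lemma nadd_nadd_left (q a b c : ℕ) : nadd q a (nadd q b c) = nred q (a + b + c) := by
  rw [nadd_eq_nred, nadd_eq_nred]
  apply nred_congr
  · have h1 : (a + nred q (b + c)) % (q-1) = (a % (q-1) + (nred q (b+c)) % (q-1)) % (q-1) :=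
      Nat.add_mod _ _ _
    rw [h1, nred_mod, ← Nat.add_mod]; congr 1; omega
  · constructor
    · intro h
      have ha : a = 0 := by omega
      have : nred q (b + c) = 0 := by omega
      have := nred_eq_zero.mp this
      omega
    · intro h
      have : nred q (b + c) = 0 := nred_eq_zero.mpr (by omega)
      omega

instance nadd_lc (q : ℕ) : LeftCommutative (nadd q) :=
  ⟨fun a b c => by rw [nadd_nadd_left, nadd_nadd_left]; congr 1; omega⟩

lemma nadd_assoc (q a b c : ℕ) : nadd q (nadd q a b) c = nadd q a (nadd q b c) := by
  rw [nadd_nadd_left]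
  rw [show nadd q (nadd q a b) c = nadd q c (nadd q a b) by
    unfold nadd; rw [Nat.add_comm c]]
  rw [nadd_nadd_left]
  congr 1; omega

lemma nred_self {q v : ℕ} (hq : 2 ≤ q) (h : v ≤ q - 1) : nred q v = v := by
  unfold nred; split
  · omega
  · rw [Nat.mod_eq_of_lt (by omega)]; omega

lemma nadd_le {q a b : ℕ} (hq : 2 ≤ q) : nadd q a b ≤ q - 1 := by
  unfold nadd; split
  · omega
  · have := Nat.mod_lt (a + b - 1) (show 0 < q - 1 by omega)
    omega

lemma nred_idem (q x : ℕ) : nred q (nred q x) = nred q x :=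
  nred_congr (nred_mod q x) nred_eq_zero

lemma nadd_zero_left (q x : ℕ) : nadd q 0 (nred q x) = nred q x := by
  rw [nadd_eq_nred, Nat.zero_add, nred_idem]






lemma sum_le {q : ℕ} (hq : 2 ≤ q) (T : FBT) (hb : ∀ v ∈ T.leaves, v ≤ q - 1) :
    T.sum q ≤ q - 1 := by
  induction T with
  | leaf v => exact hb v (by simp [FBT.leaves])
  | node l r ihl ihr => exact nadd_le hq

lemma foldr_nadd (q : ℕ) (s : Multiset ℕ) (x y : ℕ) :
    nadd q (s.foldr (nadd q) y) x = s.foldr (nadd q) (nadd q y x) := by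
  induction s using Multiset.induction with
  | empty => simp
  | cons a s ih => simp only [Multiset.foldr_cons, nadd_assoc, ih]

lemma nred_msum (q : ℕ) (s : Multiset ℕ) : nred q (s.foldr (nadd q) 0) = s.foldr (nadd q) 0 := by
  induction s using Multiset.induction with
  | empty => simp [nred]
  | cons a s ih =>
    simp only [Multiset.foldr_cons, nadd_eq_nred, nred_idem]

lemma sum_eq_msum {q : ℕ} (hq : 2 ≤ q) (T : FBT) (hb : ∀ v ∈ T.leaves, v ≤ q - 1) :
    T.sum q = T.leaves.foldr (nadd q) 0 := by
  induction T with
  | leaf v =>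
    have : v ≤ q - 1 := hb v (by simp [FBT.leaves])
    simp only [FBT.sum, FBT.leaves, Multiset.foldr_singleton]
    rw [nadd_eq_nred, Nat.add_zero, nred_self hq this]
  | node l r ihl ihr =>
    have hbl : ∀ v ∈ l.leaves, v ≤ q - 1 := fun v hv => hb v (by simp [FBT.leaves]; exact Or.inl hv)
    have hbr : ∀ v ∈ r.leaves, v ≤ q - 1 := fun v hv => hb v (by simp [FBT.leaves]; exact Or.inr hv)
    simp only [FBT.sum, FBT.leaves, Multiset.foldr_add]
    rw [ihl hbl, ihr hbr, foldr_nadd]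
    congr 1
    rw [← nred_msum q r.leaves, nadd_zero_left, nred_msum]




/-- the `k`-th base-`p` digit -/
def dg (p k n : ℕ) : ℕ := n / p ^ k % p

/-- the carry into position `k` when computing `a + b + e` (carry-in `e`) in base `p` -/
def gam (p a b e k : ℕ) : ℕ := (a % p ^ k + b % p ^ k + e) / p ^ k

/-- the wrap-around carry -/
def eBit (q a b : ℕ) : ℕ := if q ≤ a + b then 1 else 0

lemma dg_lt {p : ℕ} (hp : 0 < p) (k n : ℕ) : dg p k n < p := Nat.mod_lt _ hp

lemma gam_zero (p a b e : ℕ) : gam p a b e 0 = e := by simp [gam, Nat.mod_one]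

lemma gam_le_one {p : ℕ} (hp : 0 < p) (a b : ℕ) {e : ℕ} (he : e ≤ 1) (k : ℕ) :
    gam p a b e k ≤ 1 := by
  have hP : 0 < p ^ k := Nat.pow_pos hp
  have h1 : a % p ^ k < p ^ k := Nat.mod_lt _ hP
  have h2 : b % p ^ k < p ^ k := Nat.mod_lt _ hP
  have : gam p a b e k < 2 := by
    rw [gam]
    exact (Nat.div_lt_iff_lt_mul hP).mpr (by omega)
  omega

lemma gam_spec (p a b e k : ℕ) :
    a % p ^ k + b % p ^ k + e = (a + b + e) % p ^ k + p ^ k * gam p a b e k := by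
  have h1 : (a + b + e) % p ^ k = (a % p ^ k + b % p ^ k + e) % p ^ k := by
    have h : (a + b + e) ≡ (a % p ^ k + b % p ^ k + e) [MOD p ^ k] :=
      (((Nat.mod_modEq a _).symm.add (Nat.mod_modEq b _).symm).add_right e)
    exact h
  rw [h1, gam]
  exact (Nat.mod_add_div _ _).symm

lemma gam_rec {p : ℕ} (hp : 0 < p) (a b e k : ℕ) :
    dg p k a + dg p k b + gam p a b e k = dg p k (a + b + e) + p * gam p a b e (k + 1) := by
  have hP : 0 < p ^ k := Nat.pow_pos hp
  have E1 := gam_spec p a b e k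
  have E2 := gam_spec p a b e (k + 1)
  have d1 : a % p ^ (k+1) = a % p ^ k + p ^ k * dg p k a := by
    rw [pow_succ]; exact Nat.mod_mul
  have d2 : b % p ^ (k+1) = b % p ^ k + p ^ k * dg p k b := by
    rw [pow_succ]; exact Nat.mod_mul
  have d3 : (a+b+e) % p ^ (k+1) = (a+b+e) % p ^ k + p ^ k * dg p k (a+b+e) := by
    rw [pow_succ]; exact Nat.mod_mul
  have key : (p ^ k : ℤ) * (dg p k a + dg p k b + gam p a b e k)
      = (p ^ k : ℤ) * (dg p k (a+b+e) + p * gam p a b e (k+1)) := by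
    have E1' : ((a % p ^ k : ℕ) : ℤ) + ((b % p ^ k : ℕ) : ℤ) + e
        = ((a + b + e) % p ^ k : ℕ) + (p:ℤ) ^ k * gam p a b e k := by exact_mod_cast E1
    have E2' : ((a % p ^ (k+1) : ℕ) : ℤ) + ((b % p ^ (k+1) : ℕ) : ℤ) + e
        = ((a + b + e) % p ^ (k+1) : ℕ) + (p:ℤ) ^ (k+1) * gam p a b e (k+1) := by
      exact_mod_cast E2
    have d1' : ((a % p ^ (k+1) : ℕ) : ℤ) = ((a % p ^ k : ℕ) : ℤ) + (p:ℤ) ^ k * dg p k a := by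
      exact_mod_cast d1
    have d2' : ((b % p ^ (k+1) : ℕ) : ℤ) = ((b % p ^ k : ℕ) : ℤ) + (p:ℤ) ^ k * dg p k b := by
      exact_mod_cast d2
    have d3' : (((a+b+e) % p ^ (k+1) : ℕ) : ℤ)
        = (((a+b+e) % p ^ k : ℕ) : ℤ) + (p:ℤ) ^ k * dg p k (a+b+e) := by
      exact_mod_cast d3
    push_cast
    linear_combination E2' + d3' - d1' - d2' - E1'
  have key2 : p ^ k * (dg p k a + dg p k b + gam p a b e k)
      = p ^ k * (dg p k (a+b+e) + p * gam p a b e (k+1)) := by exact_mod_cast key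
  exact Nat.eq_of_mul_eq_mul_left hP key2

lemma nadd_spec {q a b : ℕ} (hq : 2 ≤ q) (ha : a < q) (hb : b < q) :
    a + b + eBit q a b = nadd q a b + eBit q a b * q := by
  unfold nadd eBit
  by_cases h0 : a + b = 0
  · rw [if_pos h0, if_neg (by omega)]; omega
  · rw [if_neg h0]
    by_cases he : q ≤ a + b
    · rw [if_pos he]
      have h2 : a + b - 1 - (q-1) < q - 1 := by omega
      rw [Nat.mod_eq_sub_mod (by omega), Nat.mod_eq_of_lt h2]
      omega
    · rw [if_neg he, Nat.mod_eq_of_lt (by omega)]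
      omega

lemma gam_f {p f a b : ℕ} (hp : 0 < p) (ha : a < p ^ f) (hb : b < p ^ f) :
    gam p a b (eBit (p ^ f) a b) f = eBit (p ^ f) a b := by
  have hP : 0 < p ^ f := Nat.pow_pos hp
  unfold gam eBit
  rw [Nat.mod_eq_of_lt ha, Nat.mod_eq_of_lt hb]
  by_cases he : p ^ f ≤ a + b
  · rw [if_pos he]
    exact Nat.div_eq_of_lt_le (by omega) (by omega)
  · rw [if_neg he]
    exact Nat.div_eq_of_lt (by omega)

lemma dg_nadd {p f a b k : ℕ} (hp : 0 < p) (hq : 2 ≤ p ^ f) (ha : a < p ^ f) (hb : b < p ^ f)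
    (hk : k < f) :
    dg p k (nadd (p ^ f) a b) = dg p k (a + b + eBit (p ^ f) a b) := by
  have h := nadd_spec hq ha hb
  rw [h]
  set c := nadd (p ^ f) a b with hc
  set e := eBit (p ^ f) a b with he
  have hsplit : e * p ^ f = (e * p ^ (f - k - 1) * p) * p ^ k := by
    have hpf : p ^ f = p ^ (k + 1) * p ^ (f - k - 1) := by
      rw [← pow_add]; congr 1; omega
    rw [hpf, pow_succ]; ring
  have hP : 0 < p ^ k := Nat.pow_pos hp
  unfold dg
  rw [hsplit, Nat.add_mul_div_right _ _ hP, Nat.add_mul_mod_self_right]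









lemma eBit_le_one (q a b : ℕ) : eBit q a b ≤ 1 := by unfold eBit; split <;> omega

lemma nat_cast_zmod_val {f : ℕ} [NeZero f] (i : ZMod f) : ((i.val : ℕ) : ZMod f) = i := by
  rw [ZMod.natCast_val, ZMod.cast_id]

lemma val_sub_one {f : ℕ} [NeZero f] (i : ZMod f) :
    (i - 1).val + 1 = if i.val = 0 then f else i.val := by
  have hf : 0 < f := Nat.pos_of_ne_zero (NeZero.ne f)
  have hneg : ((f - 1 : ℕ) : ZMod f) = -1 := by
    have h1 : ((f - 1 + 1 : ℕ) : ZMod f) = 0 := by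
      rw [show f - 1 + 1 = f by omega]; exact ZMod.natCast_self f
    rw [Nat.cast_add, Nat.cast_one] at h1
    linear_combination h1
  have h1 : i - 1 = ((i.val + (f - 1) : ℕ) : ZMod f) := by
    rw [Nat.cast_add, nat_cast_zmod_val, hneg]
    ring
  rw [h1, ZMod.val_natCast]
  have hv : i.val < f := ZMod.val_lt i
  by_cases h0 : i.val = 0
  · rw [if_pos h0, h0, Nat.zero_add, Nat.mod_eq_of_lt (by omega)]
    omega
  · rw [if_neg h0, Nat.mod_eq_sub_mod (by omega), Nat.mod_eq_of_lt (by omega)]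
    omega

section Act

variable {p f a b : ℕ} [NeZero f]

/-- the actual carry set arising from base-`p` addition with wrap-around -/
def actI (p f a b : ℕ) [NeZero f] : Finset (ZMod f) :=
  Finset.univ.filter (fun i : ZMod f => gam p a b (eBit (p ^ f) a b) (i.val + 1) = 1)

lemma chi_actI (hp : 0 < p) (i : ZMod f) :
    (if i ∈ actI p f a b then 1 else 0) = gam p a b (eBit (p ^ f) a b) (i.val + 1) := by
  have h := gam_le_one hp a b (eBit_le_one (p ^ f) a b) (i.val + 1)
  by_cases hm : i ∈ actI p f a b
  · rw [if_pos hm]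
    exact (Finset.mem_filter.mp hm).2.symm
  · rw [if_neg hm]
    have : ¬ (gam p a b (eBit (p ^ f) a b) (i.val + 1) = 1) := by
      intro hh; exact hm (Finset.mem_filter.mpr ⟨Finset.mem_univ i, hh⟩)
    omega

lemma chi_actI_pred (hp : 0 < p) (ha : a < p ^ f) (hb : b < p ^ f) (i : ZMod f) :
    (if i - 1 ∈ actI p f a b then 1 else 0) = gam p a b (eBit (p ^ f) a b) i.val := by
  rw [chi_actI hp, val_sub_one i]
  by_cases h0 : i.val = 0
  · rw [if_pos h0, h0, gam_f hp ha hb, gam_zero]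
  · rw [if_neg h0]

/-- the fundamental recurrence, for the actual carry set -/
lemma rec_actI (hp : 0 < p) (hq : 2 ≤ p ^ f) (ha : a < p ^ f) (hb : b < p ^ f) (i : ZMod f) :
    digitZ p f a i + digitZ p f b i + (if i - 1 ∈ actI p f a b then 1 else 0)
      = digitZ p f (nadd (p ^ f) a b) i + p * (if i ∈ actI p f a b then 1 else 0) := by
  rw [chi_actI_pred hp ha hb, chi_actI hp]
  show dg p i.val a + dg p i.val b + _ = dg p i.val (nadd (p ^ f) a b) + _
  rw [dg_nadd hp hq ha hb (ZMod.val_lt i)]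
  exact gam_rec hp a b _ i.val

lemma digits_zero {p : ℕ} (hp : 2 ≤ p) : ∀ f n, n < p ^ f → (∀ k < f, n / p ^ k % p = 0) → n = 0 := by
  intro f
  induction f with
  | zero => intro n hn _; simpa using hn
  | succ f ih =>
    intro n hn hd
    have h0 : n % p = 0 := by simpa using hd 0 (by omega)
    have hm : n / p < p ^ f := by
      rw [Nat.div_lt_iff_lt_mul (by omega)]
      calc n < p ^ (f + 1) := hn
        _ = p ^ f * p := pow_succ p f
    have hdm : ∀ k < f, (n / p) / p ^ k % p = 0 := by
      intro k hk
      rw [Nat.div_div_eq_div_mul, ← pow_succ']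
      exact hd (k + 1) (by omega)
    have hz := ih (n / p) hm hdm
    have h2 := Nat.mod_add_div n p
    rw [h0, hz, Nat.mul_zero] at h2
    omega

lemma nadd_eq_zero {q a b : ℕ} (h : nadd q a b = 0) : a + b = 0 := by
  unfold nadd at h
  by_cases h0 : a + b = 0
  · exact h0
  · rw [if_neg h0] at h; omega

lemma spec_actI (hp : 2 ≤ p) (hq : 2 ≤ p ^ f) (ha : a < p ^ f) (hb : b < p ^ f) :
    CarrySetSpec p f a b (actI p f a b) := by
  have hp0 : 0 < p := by omega
  have hrec := rec_actI (a := a) (b := b) hp0 hq ha hb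
  have hdlt : ∀ i : ZMod f, digitZ p f (nadd (p ^ f) a b) i < p := fun i => dg_lt hp0 i.val _
  have hCle : ∀ i : ZMod f, (if i ∈ actI p f a b then 1 else 0) ≤ 1 := fun i => by
    split <;> omega
  refine ⟨?_, ?_, ?_, ?_, ?_⟩
  · intro i h1 h2
    have := hrec i
    rw [if_neg h1, if_neg h2] at this
    have := hdlt i; omega
  · intro i h1 h2
    have := hrec i
    rw [if_pos h1, if_neg h2] at this
    have := hdlt i; omega
  · intro i h1 h2
    have := hrec i
    rw [if_neg h1, if_pos h2] at this
    have := hdlt i; omega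
  · intro i h1 h2
    have := hrec i
    rw [if_pos h1, if_pos h2] at this
    have := hdlt i; omega
  · intro hall
    by_contra hne
    obtain ⟨i, hi⟩ := Finset.nonempty_iff_ne_empty.mpr hne
    have hchain : ∀ k : ℕ, (if i - (k : ZMod f) ∈ actI p f a b then 1 else 0) = 1 := by
      intro k
      induction k with
      | zero => simp only [Nat.cast_zero, sub_zero]; rw [if_pos hi]
      | succ k ihk =>
        have hr := hrec (i - (k : ZMod f))
        rw [ihk] at hr
        have hs := hall (i - (k : ZMod f))
        have hd := hdlt (i - (k : ZMod f))
        have hle := hCle (i - (k : ZMod f) - 1)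
        have heq : i - ((k + 1 : ℕ) : ZMod f) = i - (k : ZMod f) - 1 := by
          push_cast; ring
        rw [heq]
        set x := (if i - (k : ZMod f) - 1 ∈ actI p f a b then 1 else 0) with hx
        omega
    have hallmem : ∀ j : ZMod f, (if j ∈ actI p f a b then 1 else 0) = 1 := by
      intro j
      have h := hchain ((i - j).val)
      rwa [nat_cast_zmod_val, sub_sub_cancel] at h
    have hdz : ∀ j : ZMod f, digitZ p f (nadd (p ^ f) a b) j = 0 := by
      intro j
      have hr := hrec j
      rw [hallmem j, hallmem (j - 1)] at hr
      have := hall j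
      omega
    have hc0 : nadd (p ^ f) a b = 0 := by
      apply digits_zero hp f
      · have := nadd_le (a := a) (b := b) hq; omega
      · intro k hk
        have := hdz ((k : ZMod f))
        rwa [digitZ, ZMod.val_natCast, Nat.mod_eq_of_lt hk] at this
    have hab := nadd_eq_zero hc0
    have h0 := hall 0
    have : digitZ p f a 0 = 0 := by
      unfold digitZ
      have : a = 0 := by omega
      simp [this]
    have : digitZ p f b 0 = 0 := by
      unfold digitZ
      have : b = 0 := by omega
      simp [this]
    omega

end Act





section Unique

variable {p f a b : ℕ} [NeZero f]

lemma spec_mono (hp : 2 ≤ p) {I J : Finset (ZMod f)} (hI : CarrySetSpec p f a b I)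
    (hJ : CarrySetSpec p f a b J) {i : ZMod f} (hiI : i ∈ I) (hiJ : i ∉ J) : False := by
  obtain ⟨I1, I2, I3, I4, I5⟩ := hI
  obtain ⟨J1, J2, J3, J4, J5⟩ := hJ
  have key : ∀ k : ℕ, (i - (k : ZMod f)) ∈ I ∧ (i - (k : ZMod f)) ∉ J ∧
      digitZ p f a (i - (k : ZMod f)) + digitZ p f b (i - (k : ZMod f)) = p - 1 := by
    intro k
    induction k with
    | zero =>
      simp only [Nat.cast_zero, sub_zero]
      refine ⟨hiI, hiJ, ?_⟩
      have h1 : p - 1 ≤ digitZ p f a i + digitZ p f b i := by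
        by_cases h : i - 1 ∈ I
        · exact I4 i h hiI
        · have := I3 i h hiI; omega
      have h2 : digitZ p f a i + digitZ p f b i ≤ p - 1 := by
        by_cases h : i - 1 ∈ J
        · have := J2 i h hiJ; omega
        · exact J1 i h hiJ
      omega
    | succ k ihk =>
      obtain ⟨h1, h2, h3⟩ := ihk
      set j := i - (k : ZMod f) with hj
      have e1 : i - ((k + 1 : ℕ) : ZMod f) = j - 1 := by rw [hj]; push_cast; ring
      rw [e1]
      have hj1I : j - 1 ∈ I := by
        by_contra h
        have := I3 j h h1; omega
      have hj1J : j - 1 ∉ J := by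
        intro h
        have := J2 j h h2; omega
      refine ⟨hj1I, hj1J, ?_⟩
      have hub : digitZ p f a (j-1) + digitZ p f b (j-1) ≤ p - 1 := by
        by_cases h : (j - 1) - 1 ∈ J
        · have := J2 _ h hj1J; omega
        · exact J1 _ h hj1J
      have hlb : p - 1 ≤ digitZ p f a (j-1) + digitZ p f b (j-1) := by
        by_cases h : (j - 1) - 1 ∈ I
        · exact I4 _ h hj1I
        · have := I3 _ h hj1I; omega
      omega
  have hall : ∀ j : ZMod f, digitZ p f a j + digitZ p f b j = p - 1 := by
    intro j
    have h := (key ((i - j).val)).2.2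
    rwa [nat_cast_zmod_val, sub_sub_cancel] at h
  rw [I5 hall] at hiI
  exact Finset.notMem_empty i hiI

lemma spec_unique (hp : 2 ≤ p) {I J : Finset (ZMod f)} (hI : CarrySetSpec p f a b I)
    (hJ : CarrySetSpec p f a b J) : I = J := by
  ext i
  constructor
  · intro h
    by_contra hn
    exact spec_mono hp hI hJ h hn
  · intro h
    by_contra hn
    exact spec_mono hp hJ hI h hn

lemma carrySet_eq_actI (hp : 2 ≤ p) (hq : 2 ≤ p ^ f) (ha : a < p ^ f) (hb : b < p ^ f) :
    carrySet p f a b = actI p f a b := by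
  unfold carrySet
  split
  · next h => exact spec_unique hp h.choose_spec (spec_actI hp hq ha hb)
  · next h => exact absurd ⟨actI p f a b, spec_actI hp hq ha hb⟩ h

/-- the fundamental recurrence for `carrySet` -/
lemma carry_rec (hp : 2 ≤ p) (hq : 2 ≤ p ^ f) (ha : a < p ^ f) (hb : b < p ^ f) (i : ZMod f) :
    digitZ p f a i + digitZ p f b i + (if i - 1 ∈ carrySet p f a b then 1 else 0)
      = digitZ p f (nadd (p ^ f) a b) i + p * (if i ∈ carrySet p f a b then 1 else 0) := by
  rw [carrySet_eq_actI hp hq ha hb]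
  exact rec_actI (by omega) hq ha hb i

end Unique


lemma sum_eq_of_leaves {q : ℕ} (hq : 2 ≤ q) (T T' : FBT) (hb : ∀ v ∈ T.leaves, v ≤ q - 1)
    (hb' : ∀ v ∈ T'.leaves, v ≤ q - 1) (h : T.leaves = T'.leaves) : T.sum q = T'.sum q := by
  rw [sum_eq_msum hq T hb, sum_eq_msum hq T' hb', h]

lemma count_rec {p f : ℕ} [NeZero f] (hp : 2 ≤ p) (hq : 2 ≤ p ^ f) (T : FBT)
    (hb : ∀ v ∈ T.leaves, v ≤ p ^ f - 1) (i : ZMod f) :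
    ((T.leaves.map (fun v => digitZ p f v i)).sum : ℕ)
        + Multiset.count (i - 1) (T.carries p f (p ^ f))
      = digitZ p f (T.sum (p ^ f)) i + p * Multiset.count i (T.carries p f (p ^ f)) := by
  induction T with
  | leaf v => simp [FBT.leaves, FBT.carries, FBT.sum]
  | node l r ihl ihr =>
    have hbl : ∀ v ∈ l.leaves, v ≤ p ^ f - 1 := fun v hv =>
      hb v (by simp only [FBT.leaves, Multiset.mem_add]; exact Or.inl hv)
    have hbr : ∀ v ∈ r.leaves, v ≤ p ^ f - 1 := fun v hv =>
      hb v (by simp only [FBT.leaves, Multiset.mem_add]; exact Or.inr hv)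
    have hls : l.sum (p ^ f) < p ^ f := by have := sum_le hq l hbl; omega
    have hrs : r.sum (p ^ f) < p ^ f := by have := sum_le hq r hbr; omega
    have key := carry_rec hp hq hls hrs i
    have cI : ∀ j : ZMod f,
        Multiset.count j (carrySet p f (l.sum (p ^ f)) (r.sum (p ^ f))).val
          = if j ∈ carrySet p f (l.sum (p ^ f)) (r.sum (p ^ f)) then 1 else 0 := by
      intro j
      split
      · next h => exact Multiset.count_eq_one_of_mem (Finset.nodup _) h
      · next h => exact Multiset.count_eq_zero.mpr h
    specialize ihl hbl
    specialize ihr hbr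
    simp only [FBT.leaves, FBT.carries, FBT.sum, Multiset.map_add, Multiset.sum_add,
      Multiset.count_add, cI]
    rw [Nat.mul_add, Nat.mul_add]
    linarith [ihl, ihr, key]


end S7

open S7

/-- The total multiset of carries in computing `Σ εᵢ` two elements at a time does not
depend on the full binary tree used (order/bracketing of the summation): if two full
binary trees have the same multiset of leaf labels (at least 3 of them, all canonical
representatives in `Ñ`), they produce the same multiset of carries. -/
theorem stmt_7 (p f q : ℕ) (hp : p.Prime) (hodd : Odd p) [NeZero f] (hq : q = p ^ f)
    (T T' : FBT) (hleaves : T.leaves = T'.leaves)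
    (hcard : 3 ≤ Multiset.card T.leaves)
    (hbound : ∀ v ∈ T.leaves, v ≤ q - 1) :
    T.carries p f q = T'.carries p f q := by
  have hpp : 2 ≤ p := hp.two_le

  subst hq
  have hf : 0 < f := Nat.pos_of_ne_zero (NeZero.ne f)
  have hq2 : 2 ≤ p ^ f := by
    calc 2 ≤ p := hpp
    _ = p ^ 1 := (pow_one p).symm
    _ ≤ p ^ f := Nat.pow_le_pow_right (by omega) hf
  have hbound' : ∀ v ∈ T'.leaves, v ≤ p ^ f - 1 := by rw [← hleaves]; exact hbound
  have hsum : T.sum (p ^ f) = T'.sum (p ^ f) :=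
    sum_eq_of_leaves hq2 T T' hbound hbound' hleaves
  have h1 := fun i => count_rec hpp hq2 T hbound i
  have h2 := fun i => count_rec hpp hq2 T' hbound' i
  have key : ∀ i : ZMod f,
      (p : ℤ) * ((Multiset.count i (T.carries p f (p ^ f)) : ℤ)
          - Multiset.count i (T'.carries p f (p ^ f)))
        = (Multiset.count (i - 1) (T.carries p f (p ^ f)) : ℤ)
          - Multiset.count (i - 1) (T'.carries p f (p ^ f)) := by
    intro i
    have a1 := h1 i
    have a2 := h2 i
    rw [hleaves, hsum] at a1
    have a1' : ((T'.leaves.map (fun v => digitZ p f v i)).sum : ℤ)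
        + (Multiset.count (i - 1) (T.carries p f (p ^ f)) : ℤ)
      = (digitZ p f (T'.sum (p ^ f)) i : ℤ)
        + (p : ℤ) * Multiset.count i (T.carries p f (p ^ f)) := by exact_mod_cast a1
    have a2' : ((T'.leaves.map (fun v => digitZ p f v i)).sum : ℤ)
        + (Multiset.count (i - 1) (T'.carries p f (p ^ f)) : ℤ)
      = (digitZ p f (T'.sum (p ^ f)) i : ℤ)
        + (p : ℤ) * Multiset.count i (T'.carries p f (p ^ f)) := by exact_mod_cast a2
    linear_combination a2' - a1'
  have iter : ∀ (i : ZMod f) (k : ℕ),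
      (Multiset.count (i - (k : ZMod f)) (T.carries p f (p ^ f)) : ℤ)
          - Multiset.count (i - (k : ZMod f)) (T'.carries p f (p ^ f))
        = (p : ℤ) ^ k * ((Multiset.count i (T.carries p f (p ^ f)) : ℤ)
          - Multiset.count i (T'.carries p f (p ^ f))) := by
    intro i k
    induction k with
    | zero => simp
    | succ k ihk =>
      have e1 : i - ((k + 1 : ℕ) : ZMod f) = (i - (k : ZMod f)) - 1 := by push_cast; ring
      rw [e1, ← key (i - (k : ZMod f)), ihk, pow_succ]
      ring
  have hzero : ∀ i : ZMod f, Multiset.count i (T.carries p f (p ^ f))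
      = Multiset.count i (T'.carries p f (p ^ f)) := by
    intro i
    have h := iter i f
    rw [ZMod.natCast_self, sub_zero] at h
    set D : ℤ := (Multiset.count i (T.carries p f (p ^ f)) : ℤ)
      - Multiset.count i (T'.carries p f (p ^ f)) with hD
    have hfac : ((p : ℤ) ^ f - 1) * D = 0 := by linear_combination -h
    have hpf : ((p : ℤ) ^ f - 1) ≠ 0 := by
      have : (2 : ℤ) ≤ (p : ℤ) ^ f := by exact_mod_cast hq2
      omega
    have : D = 0 := by
      rcases mul_eq_zero.mp hfac with h' | h'
      · exact absurd h' hpf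
      · exact h'
    omega
  exact Multiset.ext.mpr hzero
end

section
/- In a formal power series ring E[[X]] over a field E, if Σ a_i X^i is invertible (a_0 ≠ 0), then the coefficient b_ℓ of its inverse is given by b_ℓ = Σ_{β ∈ Part(ℓ)} (−1)^{|β|} |β|! · a_0^{−(|β|+1)} · ∏_{i=1}^{ℓ} a_i^{β(i)} / β(i)!, where the sum runs over partitions β of ℓ, |β| is the number of parts, and β(i) the multiplicity of i as a part. -/
open Finset Nat

namespace Stmt8Aux

/-- Pascal-type recurrence for multinomial coefficients. -/
lemma pascal {s : Finset ℕ} {f : ℕ → ℕ} (hs : 0 < ∑ i ∈ s, f i) :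
    ∑ k ∈ s.filter (fun k => f k ≠ 0),
        Nat.multinomial s (Function.update f k (f k - 1)) = Nat.multinomial s f := by
  set D := ∏ i ∈ s, (f i)! with hD
  have hD0 : 0 < D := Finset.prod_pos fun i _ => Nat.factorial_pos _
  apply Nat.eq_of_mul_eq_mul_right hD0
  rw [Finset.sum_mul]
  have key : ∀ k ∈ s.filter (fun k => f k ≠ 0),
      Nat.multinomial s (Function.update f k (f k - 1)) * D
        = f k * (∑ i ∈ s, f i - 1)! := by
    intro k hk
    rw [Finset.mem_filter] at hk
    obtain ⟨hks, hfk⟩ := hk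
    have hfk1 : 1 ≤ f k := Nat.one_le_iff_ne_zero.2 hfk
    set g := Function.update f k (f k - 1) with hg
    have hsum : ∑ i ∈ s, g i = ∑ i ∈ s, f i - 1 := by
      rw [hg, Finset.sum_update_of_mem hks]
      have h2 := Finset.add_sum_erase s f hks
      rw [Finset.erase_eq] at h2
      omega
    have hprod : f k * ∏ i ∈ s, (g i)! = D := by
      rw [hD, ← Finset.mul_prod_erase s (fun i => (f i)!) hks,
        ← Finset.mul_prod_erase s (fun i => (g i)!) hks, ← mul_assoc]
      congr 1
      · rw [hg, Function.update_self, ← Nat.succ_pred_eq_of_pos hfk1, Nat.factorial_succ]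
        congr 1 <;> omega
      · apply Finset.prod_congr rfl
        intro i hi
        rw [hg, Function.update_of_ne (Finset.ne_of_mem_erase hi)]
    calc Nat.multinomial s g * D = Nat.multinomial s g * (f k * ∏ i ∈ s, (g i)!) := by
          rw [hprod]
      _ = f k * ((∏ i ∈ s, (g i)!) * Nat.multinomial s g) := by ring
      _ = f k * (∑ i ∈ s, g i)! := by rw [Nat.multinomial_spec]
      _ = f k * (∑ i ∈ s, f i - 1)! := by rw [hsum]
  rw [Finset.sum_congr rfl key, ← Finset.sum_mul]
  have : ∑ k ∈ s.filter (fun k => f k ≠ 0), f k = ∑ i ∈ s, f i := by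
    apply Finset.sum_filter_of_ne
    intro k _ h
    exact h
  rw [this, mul_comm (Nat.multinomial s f) D, Nat.multinomial_spec]
  obtain ⟨m, hm⟩ : ∃ m, ∑ i ∈ s, f i = m + 1 := ⟨∑ i ∈ s, f i - 1, by omega⟩
  rw [hm]
  simp [Nat.factorial_succ]

lemma mem_Icc_of_mem_parts {n : ℕ} (β : Nat.Partition n) {i : ℕ} (hi : i ∈ β.parts) :
    i ∈ Finset.Icc 1 n := by
  rw [Finset.mem_Icc]
  exact ⟨β.parts_pos hi, (Multiset.le_sum_of_mem hi).trans_eq β.parts_sum⟩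

lemma count_eq_zero_outside {n : ℕ} (β : Nat.Partition n) {i : ℕ}
    (hi : i ∉ Finset.Icc 1 n) : β.parts.count i = 0 :=
  Multiset.count_eq_zero.2 fun hmem => hi (mem_Icc_of_mem_parts β hmem)

lemma sum_count {n : ℕ} (β : Nat.Partition n) :
    ∑ i ∈ Finset.Icc 1 n, β.parts.count i = Multiset.card β.parts := by
  rw [← Multiset.toFinset_sum_count_eq β.parts]
  apply (Finset.sum_subset _ _).symm
  · intro i hi
    exact mem_Icc_of_mem_parts β (Multiset.mem_toFinset.1 hi)
  · intro i _ hi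
    exact Multiset.count_eq_zero.2 fun hmem => hi (Multiset.mem_toFinset.2 hmem)

variable {E : Type} [Field E]

/-- The summand, as a function of an arbitrary multiset. -/
noncomputable def gm (a : PowerSeries E) (n : ℕ) (M : Multiset ℕ) : E :=
  (-1 : E) ^ (Multiset.card M) *
    (Nat.multinomial (Finset.Icc 1 n) (fun i => M.count i) : E) *
    (PowerSeries.constantCoeff a)⁻¹ ^ (Multiset.card M + 1) *
    ∏ i ∈ Finset.Icc 1 n, (PowerSeries.coeff i a) ^ (M.count i)

lemma gm_eq (a : PowerSeries E) {m n : ℕ} (hmn : m ≤ n) (M : Multiset ℕ)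
    (hM : ∀ i, i ∉ Finset.Icc 1 m → M.count i = 0) : gm a n M = gm a m M := by
  have hsub : Finset.Icc 1 m ⊆ Finset.Icc 1 n := Finset.Icc_subset_Icc le_rfl hmn
  have hsum : ∑ i ∈ Finset.Icc 1 n, M.count i = ∑ i ∈ Finset.Icc 1 m, M.count i := by
    refine (Finset.sum_subset hsub ?_).symm
    intro i _ hi
    exact hM i hi
  have hprod1 : ∏ i ∈ Finset.Icc 1 n, (M.count i)! = ∏ i ∈ Finset.Icc 1 m, (M.count i)! := by
    refine (Finset.prod_subset hsub ?_).symm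
    intro i _ hi
    simp [hM i hi]
  have hprod2 : ∏ i ∈ Finset.Icc 1 n, (PowerSeries.coeff i a) ^ (M.count i)
      = ∏ i ∈ Finset.Icc 1 m, (PowerSeries.coeff i a) ^ (M.count i) := by
    refine (Finset.prod_subset hsub ?_).symm
    intro i _ hi
    simp [hM i hi]
  unfold gm Nat.multinomial
  rw [hsum, hprod1, hprod2]

/-- Insert a part `k` into a partition of `n - k`, giving a partition of `n`. -/
noncomputable def insertPart (n k : ℕ) (γ : Nat.Partition (n - k)) : Nat.Partition n :=
  if h : 1 ≤ k ∧ k ≤ n then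
    ⟨k ::ₘ γ.parts, fun hi => by
        rcases Multiset.mem_cons.1 hi with rfl | hi
        · exact h.1
        · exact γ.parts_pos hi,
      by rw [Multiset.sum_cons, γ.parts_sum]; omega⟩
  else default

lemma insertPart_parts {n k : ℕ} (h1 : 1 ≤ k) (h2 : k ≤ n) (γ : Nat.Partition (n - k)) :
    (insertPart n k γ).parts = k ::ₘ γ.parts := by
  rw [insertPart, dif_pos ⟨h1, h2⟩]

/-- Remove one copy of the part `k` from a partition of `n`. -/
noncomputable def erasePart (n : ℕ) (β : Nat.Partition n) (k : ℕ) : Nat.Partition (n - k) :=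
  if h : k ∈ β.parts then
    ⟨β.parts.erase k, fun hi => β.parts_pos (Multiset.mem_of_mem_erase hi),
      by
        have := congrArg Multiset.sum (Multiset.cons_erase h)
        rw [Multiset.sum_cons, β.parts_sum] at this
        omega⟩
  else default

lemma erasePart_parts {n : ℕ} (β : Nat.Partition n) {k : ℕ} (h : k ∈ β.parts) :
    (erasePart n β k).parts = β.parts.erase k := by
  rw [erasePart, dif_pos h]

end Stmt8Aux

open Stmt8Aux

theorem stmt8_key (E : Type) [Field E] (a : PowerSeries E)
    (h : PowerSeries.constantCoeff a ≠ 0) (n : ℕ) :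
    PowerSeries.coeff n a⁻¹ = ∑ β : Nat.Partition n, gm a n β.parts := by
  induction n using Nat.strong_induction_on with
  | _ n ih =>
  set A := PowerSeries.constantCoeff a with hA
  rcases Nat.eq_zero_or_pos n with rfl | hn
  · rw [PowerSeries.coeff_inv, if_pos rfl]
    rw [Fintype.sum_unique]
    simp [gm]
  have hn0 : n ≠ 0 := hn.ne'
  rw [PowerSeries.coeff_inv, if_neg hn0]
  -- rewrite the antidiagonal sum as a sum over `Icc 1 n`
  have step1 :
      (∑ x ∈ antidiagonal n,
          if x.2 < n then PowerSeries.coeff x.1 a * PowerSeries.coeff x.2 a⁻¹ else 0)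
        = ∑ k ∈ Finset.Icc 1 n, PowerSeries.coeff k a *
            ∑ γ : Nat.Partition (n - k), gm a n γ.parts := by
    rw [Finset.Nat.sum_antidiagonal_eq_sum_range_succ_mk, Finset.sum_range_succ']
    have h0 : (if n - 0 < n then PowerSeries.coeff 0 a * PowerSeries.coeff (n - 0) a⁻¹
        else 0) = 0 := by
      rw [if_neg]; omega
    rw [h0, add_zero, ← Finset.Ico_add_one_right_eq_Icc, Finset.sum_Ico_eq_sum_range]
    simp only [Nat.add_sub_cancel]
    apply Finset.sum_congr rfl
    intro i hi
    rw [Finset.mem_range] at hi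
    have h1k : 1 ≤ 1 + i := by omega
    have hkn : 1 + i ≤ n := by omega
    rw [if_pos (by omega : n - (i + 1) < n), ih (n - (i + 1)) (by omega)]
    have h1 : (1 : ℕ) + i = i + 1 := by omega
    rw [h1]
    congr 1
    apply Finset.sum_congr rfl
    intro γ _
    exact (gm_eq a (by omega) γ.parts fun i hi => count_eq_zero_outside γ hi).symm
  rw [step1]
  -- reindex the double sum via the partition-with-marked-part bijection
  have step2 :
      ∑ k ∈ Finset.Icc 1 n, PowerSeries.coeff k a *
          ∑ γ : Nat.Partition (n - k), gm a n γ.parts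
        = ∑ β : Nat.Partition n, ∑ k ∈ β.parts.toFinset,
            PowerSeries.coeff k a * gm a n (β.parts.erase k) := by
    simp_rw [Finset.mul_sum]
    rw [← Finset.sum_sigma (Finset.Icc 1 n) (fun k => (Finset.univ : Finset (Nat.Partition (n - k))))
        (fun p => PowerSeries.coeff p.1 a * gm a n p.2.parts),
      ← Finset.sum_sigma (Finset.univ : Finset (Nat.Partition n)) (fun β => β.parts.toFinset)
        (fun q => PowerSeries.coeff q.2 a * gm a n (q.1.parts.erase q.2))]
    refine Finset.sum_nbij' (fun p => ⟨insertPart n p.1 p.2, p.1⟩)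
      (fun q => ⟨q.2, erasePart n q.1 q.2⟩) ?_ ?_ ?_ ?_ ?_
    · rintro ⟨k, γ⟩ hp
      rw [Finset.mem_sigma] at hp
      obtain ⟨hk, -⟩ := hp
      rw [Finset.mem_Icc] at hk
      rw [Finset.mem_sigma]
      refine ⟨Finset.mem_univ _, ?_⟩
      rw [Multiset.mem_toFinset, insertPart_parts hk.1 hk.2]
      exact Multiset.mem_cons_self _ _
    · rintro ⟨β, k⟩ hq
      rw [Finset.mem_sigma, Multiset.mem_toFinset] at hq
      rw [Finset.mem_sigma]
      exact ⟨mem_Icc_of_mem_parts β hq.2, Finset.mem_univ _⟩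
    · rintro ⟨k, γ⟩ hp
      rw [Finset.mem_sigma, Finset.mem_Icc] at hp
      obtain ⟨⟨hk1, hk2⟩, -⟩ := hp
      have hmem : k ∈ (insertPart n k γ).parts := by
        rw [insertPart_parts hk1 hk2]; exact Multiset.mem_cons_self _ _
      have heq : erasePart n (insertPart n k γ) k = γ := by
        apply Nat.Partition.ext
        rw [erasePart_parts _ hmem, insertPart_parts hk1 hk2, Multiset.erase_cons_head]
      show (⟨k, erasePart n (insertPart n k γ) k⟩ : Σ k : ℕ, Nat.Partition (n - k)) = ⟨k, γ⟩
      rw [heq]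
    · rintro ⟨β, k⟩ hq
      rw [Finset.mem_sigma, Multiset.mem_toFinset] at hq
      have hk1 : 1 ≤ k := β.parts_pos hq.2
      have hk2 : k ≤ n := (Finset.mem_Icc.1 (mem_Icc_of_mem_parts β hq.2)).2
      have heq : insertPart n k (erasePart n β k) = β := by
        apply Nat.Partition.ext
        rw [insertPart_parts hk1 hk2, erasePart_parts _ hq.2, Multiset.cons_erase hq.2]
      show (⟨insertPart n k (erasePart n β k), k⟩ : Σ _ : Nat.Partition n, ℕ) = ⟨β, k⟩
      rw [heq]
    · rintro ⟨k, γ⟩ hp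
      rw [Finset.mem_sigma, Finset.mem_Icc] at hp
      obtain ⟨⟨hk1, hk2⟩, -⟩ := hp
      simp only
      rw [insertPart_parts hk1 hk2, Multiset.erase_cons_head]
  rw [step2]
  -- per-partition identity
  have step3 : ∀ β : Nat.Partition n,
      ∑ k ∈ β.parts.toFinset, PowerSeries.coeff k a * gm a n (β.parts.erase k)
        = -A * gm a n β.parts := by
    intro β
    set M := β.parts with hM
    set m := Multiset.card M with hm
    have hMne : M ≠ 0 := fun h0 =>
      hn0 (by rw [← β.parts_sum, ← hM, h0, Multiset.sum_zero])
    have hm1 : 1 ≤ m := by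
      rw [hm, Nat.one_le_iff_ne_zero]
      simpa using hMne
    have htf : M.toFinset = (Finset.Icc 1 n).filter (fun k => M.count k ≠ 0) := by
      ext k
      rw [Multiset.mem_toFinset, Finset.mem_filter]
      constructor
      · intro hk
        exact ⟨mem_Icc_of_mem_parts β hk, Multiset.count_ne_zero.2 hk⟩
      · intro hk
        exact Multiset.count_ne_zero.1 hk.2
    have hterm : ∀ k ∈ M.toFinset,
        PowerSeries.coeff k a * gm a n (M.erase k)
          = (-1 : E) ^ (m - 1) *
              (Nat.multinomial (Finset.Icc 1 n)
                (Function.update (fun i => M.count i) k (M.count k - 1)) : E) *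
              A⁻¹ ^ m * ∏ i ∈ Finset.Icc 1 n, (PowerSeries.coeff i a) ^ (M.count i) := by
      intro k hk
      rw [Multiset.mem_toFinset] at hk
      have hkIcc : k ∈ Finset.Icc 1 n := mem_Icc_of_mem_parts β hk
      have hck : 1 ≤ M.count k := Multiset.one_le_count_iff_mem.2 hk
      have hcount : ∀ i, (M.erase k).count i
          = Function.update (fun i => M.count i) k (M.count k - 1) i := by
        intro i
        rcases eq_or_ne i k with rfl | hik
        · rw [Multiset.count_erase_self, Function.update_self]
        · rw [Multiset.count_erase_of_ne hik, Function.update_of_ne hik]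
      have hcard : Multiset.card (M.erase k) = m - 1 := Multiset.card_erase_of_mem hk
      rw [gm, hcard]
      have hmm : m - 1 + 1 = m := by omega
      rw [hmm]
      have hmulti : Nat.multinomial (Finset.Icc 1 n) (fun i => (M.erase k).count i)
          = Nat.multinomial (Finset.Icc 1 n)
              (Function.update (fun i => M.count i) k (M.count k - 1)) :=
        Nat.multinomial_congr fun i _ => hcount i
      rw [hmulti]
      have hprod : PowerSeries.coeff k a *
          ∏ i ∈ Finset.Icc 1 n, (PowerSeries.coeff i a) ^ ((M.erase k).count i)
            = ∏ i ∈ Finset.Icc 1 n, (PowerSeries.coeff i a) ^ (M.count i) := by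
        rw [← Finset.mul_prod_erase (Finset.Icc 1 n)
            (fun i => (PowerSeries.coeff i a) ^ ((M.erase k).count i)) hkIcc,
          ← Finset.mul_prod_erase (Finset.Icc 1 n)
            (fun i => (PowerSeries.coeff i a) ^ (M.count i)) hkIcc, ← mul_assoc]
        congr 1
        · rw [hcount k, Function.update_self, ← _root_.pow_succ']
          congr 1
          omega
        · apply Finset.prod_congr rfl
          intro i hi
          rw [hcount i, Function.update_of_ne (Finset.ne_of_mem_erase hi)]
      calc PowerSeries.coeff k a *
            ((-1 : E) ^ (m - 1) *
              (Nat.multinomial (Finset.Icc 1 n)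
                (Function.update (fun i => M.count i) k (M.count k - 1)) : E) *
              A⁻¹ ^ m *
              ∏ i ∈ Finset.Icc 1 n, (PowerSeries.coeff i a) ^ ((M.erase k).count i))
          = (-1 : E) ^ (m - 1) *
              (Nat.multinomial (Finset.Icc 1 n)
                (Function.update (fun i => M.count i) k (M.count k - 1)) : E) *
              A⁻¹ ^ m *
              (PowerSeries.coeff k a *
                ∏ i ∈ Finset.Icc 1 n, (PowerSeries.coeff i a) ^ ((M.erase k).count i)) := by
            ring
        _ = _ := by rw [hprod]
    rw [Finset.sum_congr rfl hterm]
    have hsum0 : 0 < ∑ i ∈ Finset.Icc 1 n, M.count i := by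
      have hsc : ∑ i ∈ Finset.Icc 1 n, M.count i = Multiset.card M := by
        rw [hM]; exact sum_count β
      omega
    have hpascal := pascal hsum0
    have key : ∑ k ∈ M.toFinset,
        ((-1 : E) ^ (m - 1) *
          (Nat.multinomial (Finset.Icc 1 n)
            (Function.update (fun i => M.count i) k (M.count k - 1)) : E) *
          A⁻¹ ^ m * ∏ i ∈ Finset.Icc 1 n, (PowerSeries.coeff i a) ^ (M.count i))
        = (-1 : E) ^ (m - 1) *
            ((Nat.multinomial (Finset.Icc 1 n) (fun i => M.count i) : E)) *
            A⁻¹ ^ m * ∏ i ∈ Finset.Icc 1 n, (PowerSeries.coeff i a) ^ (M.count i) := by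
      rw [← hpascal, Nat.cast_sum, ← htf, Finset.mul_sum, Finset.sum_mul, Finset.sum_mul]
    rw [key, gm, ← hm]
    have hAA : A * A⁻¹ = 1 := mul_inv_cancel₀ h
    obtain ⟨j, hj⟩ : ∃ j, m = j + 1 := ⟨m - 1, by omega⟩
    rw [hj]
    simp only [Nat.add_sub_cancel]
    rw [pow_succ (-1 : E) j, pow_succ A⁻¹ (j + 1), pow_succ A⁻¹ j]
    linear_combination (-((-1 : E) ^ j) *
      (Nat.multinomial (Finset.Icc 1 n) (fun i => M.count i) : E) * A⁻¹ ^ j * A⁻¹ *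
      ∏ i ∈ Finset.Icc 1 n, (PowerSeries.coeff i a) ^ (M.count i)) * hAA
  rw [Finset.sum_congr rfl fun β _ => step3 β, ← Finset.mul_sum]
  have hAA : A * A⁻¹ = 1 := mul_inv_cancel₀ h
  field_simp
  rw [← hA, mul_div_cancel_left₀ _ h]

/-- Coefficients of the inverse of a formal power series.  If `Σ aᵢ Xⁱ ∈ E[[X]]` is
invertible (`a₀ ≠ 0`), then for `ℓ > 0` the coefficient `b_ℓ` of its inverse is
`Σ_{β ∈ Part(ℓ)} (−1)^{|β|} (|β|!/∏ᵢ β(i)!) a₀^{−(|β|+1)} ∏ᵢ aᵢ^{β(i)}`,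
where `|β|` is the number of parts of the partition `β` and `β(i)` the multiplicity of
`i` as a part (the multinomial `|β|!/∏ β(i)!` is a natural number, computed by exact
division). -/
theorem stmt_8 (E : Type) [Field E] (a : PowerSeries E)
    (h : PowerSeries.constantCoeff a ≠ 0) (ℓ : ℕ) (hl : 0 < ℓ) :
    PowerSeries.coeff ℓ a⁻¹ =
      ∑ β : Nat.Partition ℓ,
        ((-1 : E) ^ (Multiset.card β.parts)) *
          (((Multiset.card β.parts).factorial /
              ∏ i ∈ Finset.Icc 1 ℓ, (β.parts.count i).factorial : ℕ) : E) *
          (PowerSeries.constantCoeff a)⁻¹ ^ (Multiset.card β.parts + 1) *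
          ∏ i ∈ Finset.Icc 1 ℓ, (PowerSeries.coeff i a) ^ (β.parts.count i) := by
  rw [stmt8_key E a h ℓ]
  apply Finset.sum_congr rfl
  intro β _
  rw [gm]
  congr 3
  rw [Nat.multinomial, sum_count β]
end

section
/- With V_{n,r} = Ind_{B_n}^{G_n} χ_r over a field E ⊇ k, the set B_{n,r} = {f_j : j ∈ Ñ^n} ∪ {f_{(∞,j')} : j' ∈ Ñ^{n-1}} is an E-basis of V_{n,r}, where f_j = Σ_{λ ∈ O_n} (λ,1;1,0) ⊗ λ_0^{j_0}···λ_{n-1}^{j_{n-1}} and f_{(∞,j')} = w f_{(0,j')}. In particular dim_E V_{n,r} = (q+1)q^{n-1}. -/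
open Matrix

/-- The (left) action of `G` on functions `G → E` by right translation:
`(x • φ)(y) = φ(y x)`. -/
def rightTransl (E : Type) [Field E] {G : Type} [Group G] (x : G) : (G → E) →ₗ[E] (G → E) where
  toFun φ := fun y => φ (y * x)
  map_add' _ _ := rfl
  map_smul' _ _ := rfl

/-- The induced representation `Ind_H^G χ`, modeled as the space of functions
`φ : G → E` with `φ(h g) = χ(h) φ(g)` for `h ∈ H`; the group `G` acts by right
translation.  (For `g ∈ G`, `v ∈ E`, the element `g ⊗ v` is the function supported on
`H g⁻¹` with value `χ(h) v` at `h g⁻¹`.) -/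
def indRep (E : Type) [Field E] {G : Type} [Group G] (H : Subgroup G) (χ : G → E) :
    Submodule E (G → E) where
  carrier := {φ | ∀ h ∈ H, ∀ g, φ (h * g) = χ h * φ g}
  add_mem' := by
    intro a b ha hb h hh g
    simp only [Pi.add_apply, ha h hh g, hb h hh g]
    ring
  zero_mem' := by
    intro h hh g
    simp
  smul_mem' := by
    intro c φ hφ h hh g
    simp only [Pi.smul_apply, smul_eq_mul, hφ h hh g]
    ring

open Classical in
/-- The element `g ⊗ v ∈ Ind_H^G χ`: the function supported on `H g⁻¹` taking the value
`χ(h) v` at `h g⁻¹`. -/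
noncomputable def elemTensor (E : Type) [Field E] {G : Type} [Group G] (H : Subgroup G)
    (χ : G → E) (g : G) (v : E) : G → E :=
  fun y => if y * g ∈ H then χ (y * g) * v else 0

/-- The invertible matrix `(λ 1; 1 0)` (of determinant `−1`). -/
noncomputable def matL (R : Type) [CommRing R] (lam : R) : GL (Fin 2) R :=
  ((Matrix.isUnit_iff_isUnit_det !![lam, 1; 1, 0]).mpr
    (by rw [Matrix.det_fin_two_of]; simp)).unit

/-- The character `χ_r` of the Borel subgroup of `GL₂(R)` for a local ring `R`:
`(a b; 0 d) ↦ (residue d)^r`, with values in an extension `E` of the residue field. -/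
noncomputable def chiR (R E : Type) [CommRing R] [IsLocalRing R] [Field E]
    [Algebra (IsLocalRing.ResidueField R) E] (r : ℕ) : GL (Fin 2) R → E :=
  fun g => algebraMap (IsLocalRing.ResidueField R) E
    (IsLocalRing.residue R ((g : Matrix (Fin 2) (Fin 2) R) 1 1) ^ r)

/-- The basis element `f_j = Σ_{λ ∈ R} (λ 1; 1 0) ⊗ λ₀^{j₀}⋯λ_{n−1}^{j_{n−1}}` of the
principal series, where `dig x i` is the `i`-th Teichmüller digit of `x ∈ R`. -/
noncomputable def fvec (R E : Type) [CommRing R] [IsLocalRing R] [Fintype R] [Field E]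
    [Algebra (IsLocalRing.ResidueField R) E] (B : Subgroup (GL (Fin 2) R)) (r n : ℕ)
    (dig : R → ℕ → IsLocalRing.ResidueField R) (j : Fin n → ℕ) : GL (Fin 2) R → E :=
  ∑ lam : R, elemTensor E B (chiR R E r) (matL R lam)
    (algebraMap (IsLocalRing.ResidueField R) E (∏ i : Fin n, dig lam i ^ j i))

section helpers
variable {R : Type} [CommRing R]

/-- Build an element of `GL (Fin 2) R` from a matrix with unit determinant. -/
noncomputable def glOf (M : Matrix (Fin 2) (Fin 2) R) (h : IsUnit M.det) : GL (Fin 2) R :=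
  ((Matrix.isUnit_iff_isUnit_det M).mpr h).unit

@[simp] lemma glOf_coe (M : Matrix (Fin 2) (Fin 2) R) (h : IsUnit M.det) :
    ((glOf M h : GL (Fin 2) R) : Matrix (Fin 2) (Fin 2) R) = M := IsUnit.unit_spec _

@[simp] lemma matL_coe (lam : R) :
    ((matL R lam : GL (Fin 2) R) : Matrix (Fin 2) (Fin 2) R) = !![lam, 1; 1, 0] :=
  IsUnit.unit_spec _

/-- The coset representative `(0 1; 1 -λ) = (matL λ)⁻¹`. -/
noncomputable def gRep (lam : R) : GL (Fin 2) R :=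
  glOf !![0, 1; 1, -lam] (by rw [Matrix.det_fin_two_of]; simpa using isUnit_one.neg)

/-- The coset representative `(1 0; -μ 1)`. -/
noncomputable def dRep (mu : R) : GL (Fin 2) R :=
  glOf !![1, 0; -mu, 1] (by rw [Matrix.det_fin_two_of]; simpa using isUnit_one)

@[simp] lemma gRep_coe (lam : R) :
    ((gRep lam : GL (Fin 2) R) : Matrix (Fin 2) (Fin 2) R) = !![0, 1; 1, -lam] := glOf_coe _ _

@[simp] lemma dRep_coe (mu : R) :
    ((dRep mu : GL (Fin 2) R) : Matrix (Fin 2) (Fin 2) R) = !![1, 0; -mu, 1] := glOf_coe _ _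

lemma gRep_mul_matL (mu lam : R) :
    ((gRep mu * matL R lam : GL (Fin 2) R) : Matrix (Fin 2) (Fin 2) R)
      = !![1, 0; lam - mu, 1] := by
  rw [Units.val_mul, gRep_coe, matL_coe, Matrix.mul_fin_two]
  norm_num [sub_eq_add_neg, add_comm]

lemma dRep_mul_matL (mu lam : R) :
    ((dRep mu * matL R lam : GL (Fin 2) R) : Matrix (Fin 2) (Fin 2) R)
      = !![lam, 1; 1 - mu * lam, -mu] := by
  rw [Units.val_mul, dRep_coe, matL_coe, Matrix.mul_fin_two]
  norm_num [sub_eq_add_neg, add_comm]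

lemma dRep_mul_matL_zero (mu : R) : dRep mu * matL R 0 = gRep mu := by
  ext : 1
  rw [Units.val_mul, dRep_coe, matL_coe, gRep_coe, Matrix.mul_fin_two]
  norm_num

lemma matL_mul_gRep (lam : R) : matL R lam * gRep lam = 1 := by
  ext : 1
  rw [Units.val_mul, gRep_coe, matL_coe, Matrix.mul_fin_two, Units.val_one]
  norm_num
  exact Matrix.one_fin_two.symm

lemma dRep_mul_dRep (nu mu : R) (h : nu + mu = 0) : dRep nu * dRep mu = 1 := by
  ext : 1
  rw [Units.val_mul, dRep_coe, dRep_coe, Matrix.mul_fin_two, Units.val_one]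
  have : -nu + -mu = 0 := by rw [← neg_add, h, neg_zero]
  norm_num [this]
  exact Matrix.one_fin_two.symm

lemma mulEnt10 (g u : GL (Fin 2) R) :
    ((g * u : GL (Fin 2) R) : Matrix (Fin 2) (Fin 2) R) 1 0
      = (g : Matrix (Fin 2) (Fin 2) R) 1 0 * (u : Matrix (Fin 2) (Fin 2) R) 0 0
        + (g : Matrix (Fin 2) (Fin 2) R) 1 1 * (u : Matrix (Fin 2) (Fin 2) R) 1 0 := by
  rw [Units.val_mul, Matrix.mul_apply, Fin.sum_univ_two]

lemma mulEnt11 (g u : GL (Fin 2) R) :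
    ((g * u : GL (Fin 2) R) : Matrix (Fin 2) (Fin 2) R) 1 1
      = (g : Matrix (Fin 2) (Fin 2) R) 1 0 * (u : Matrix (Fin 2) (Fin 2) R) 0 1
        + (g : Matrix (Fin 2) (Fin 2) R) 1 1 * (u : Matrix (Fin 2) (Fin 2) R) 1 1 := by
  rw [Units.val_mul, Matrix.mul_apply, Fin.sum_univ_two]

lemma unit11 (h : GL (Fin 2) R) (h10 : (h : Matrix (Fin 2) (Fin 2) R) 1 0 = 0) :
    IsUnit ((h : Matrix (Fin 2) (Fin 2) R) 1 1) := by
  have hdet : IsUnit ((h : Matrix (Fin 2) (Fin 2) R).det) :=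
    (Matrix.isUnit_iff_isUnit_det _).mp h.isUnit
  rw [Matrix.det_fin_two, h10, mul_zero, sub_zero] at hdet
  exact isUnit_of_mul_isUnit_right hdet

end helpers
lemma rightTransl_mem {E : Type} [Field E] {G : Type} [Group G] {H : Subgroup G} {χ : G → E}
    (x : G) {φ : G → E} (hφ : φ ∈ indRep E H χ) : rightTransl E x φ ∈ indRep E H χ := by
  intro h hh y
  show φ ((h * y) * x) = χ h * φ (y * x)
  rw [mul_assoc]
  exact hφ h hh (y * x)

section helpers2
variable {R E : Type} [CommRing R] [IsLocalRing R] [Field E]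
  [Algebra (IsLocalRing.ResidueField R) E]
variable (B : Subgroup (GL (Fin 2) R))
  (hB : ∀ g : GL (Fin 2) R, g ∈ B ↔ (g : Matrix (Fin 2) (Fin 2) R) 1 0 = 0) (r : ℕ)
include hB

lemma chi_mul {h : GL (Fin 2) R} (g : GL (Fin 2) R) (hh : h ∈ B) :
    chiR R E r (h * g) = chiR R E r h * chiR R E r g := by
  unfold chiR
  rw [mulEnt11, (hB h).mp hh, zero_mul, zero_add, _root_.map_mul (IsLocalRing.residue R), mul_pow, _root_.map_mul]

lemma mem_mul_iff {h : GL (Fin 2) R} (g : GL (Fin 2) R) (hh : h ∈ B) :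
    h * g ∈ B ↔ g ∈ B := by
  rw [hB, hB, mulEnt10, (hB h).mp hh, zero_mul, zero_add]
  exact (unit11 h ((hB h).mp hh)).mul_right_eq_zero

lemma elemTensor_mem (g : GL (Fin 2) R) (v : E) :
    elemTensor E B (chiR R E r) g v ∈ indRep E B (chiR R E r) := by
  intro h hh y
  unfold elemTensor
  rw [mul_assoc]
  by_cases hy : y * g ∈ B
  · rw [if_pos ((mem_mul_iff B hB (y * g) hh).mpr hy), if_pos hy,
      chi_mul B hB r (y * g) hh, mul_assoc]
  · rw [if_neg (fun hc => hy ((mem_mul_iff B hB (y * g) hh).mp hc)), if_neg hy, mul_zero]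

lemma fvec_mem [Fintype R] (n : ℕ) (dig : R → ℕ → IsLocalRing.ResidueField R) (j : Fin n → ℕ) :
    fvec R E B r n dig j ∈ indRep E B (chiR R E r) :=
  Submodule.sum_mem _ (fun _ _ => elemTensor_mem B hB r _ _)

lemma fvec_at_gRep [Fintype R] (n : ℕ) (dig : R → ℕ → IsLocalRing.ResidueField R)
    (j : Fin n → ℕ) (mu : R) :
    fvec R E B r n dig j (gRep mu)
      = algebraMap (IsLocalRing.ResidueField R) E (∏ i : Fin n, dig mu i ^ j i) := by
  unfold fvec
  rw [Finset.sum_apply, Finset.sum_eq_single mu]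
  · unfold elemTensor
    rw [if_pos]
    · unfold chiR
      rw [gRep_mul_matL]
      norm_num
    · rw [hB, gRep_mul_matL]
      norm_num
  · intro lam _ hlam
    unfold elemTensor
    rw [if_neg]
    rw [hB, gRep_mul_matL]
    norm_num [sub_eq_zero]
    exact hlam
  · intro h
    exact absurd (Finset.mem_univ mu) h

lemma fvec_at_dRep [Fintype R] (n : ℕ) (dig : R → ℕ → IsLocalRing.ResidueField R)
    (j : Fin n → ℕ) (mu : R) (hmu : ¬ IsUnit mu) :
    fvec R E B r n dig j (dRep mu) = 0 := by
  unfold fvec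
  rw [Finset.sum_apply]
  apply Finset.sum_eq_zero
  intro lam _
  unfold elemTensor
  rw [if_neg]
  rw [hB, dRep_mul_matL]
  norm_num [sub_eq_zero]
  intro h
  exact hmu (IsUnit.of_mul_eq_one lam h.symm)

end helpers2

lemma powIndep {k E : Type} [Field k] [Fintype k] [Field E] (f : k →+* E)
    (hf : Function.Injective f) (q : ℕ) (hq : Fintype.card k = q) :
    LinearIndependent E (fun (t : Fin q) => (fun x : k => f x ^ (t : ℕ))) := by
  rw [Fintype.linearIndependent_iff]
  intro c hc t
  set P : Polynomial E := ∑ s : Fin q, Polynomial.C (c s) * Polynomial.X ^ (s : ℕ) with hP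
  have hev : ∀ x : k, P.eval (f x) = 0 := by
    intro x
    have := congrFun hc x
    simpa [P, Polynomial.eval_finset_sum] using this
  have hdeg : P.natDegree < Fintype.card k := by
    rw [hq]
    have h1 : P.natDegree ≤ q - 1 := by
      apply Polynomial.natDegree_sum_le_of_forall_le
      intro s _
      calc (Polynomial.C (c s) * Polynomial.X ^ (s : ℕ)).natDegree
          ≤ (Polynomial.X ^ (s : ℕ) : Polynomial E).natDegree := Polynomial.natDegree_C_mul_le _ _
        _ ≤ q - 1 := by rw [Polynomial.natDegree_X_pow]; omega
    have : 0 < q := t.pos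
    omega
  have hP0 : P = 0 := Polynomial.eq_zero_of_natDegree_lt_card_of_eval_eq_zero P hf hev hdeg
  have : P.coeff (t : ℕ) = c t := by
    rw [hP, Polynomial.finset_sum_coeff]
    simp only [Polynomial.coeff_C_mul, Polynomial.coeff_X_pow]
    rw [Finset.sum_eq_single t] <;> simp +contextual [Fin.val_inj, eq_comm]
  rw [hP0] at this
  simpa using this.symm

theorem sum_cons_split {E : Type} [AddCommMonoid E] {m q : ℕ} (F : (Fin (m+1) → Fin q) → E) :
    ∑ j : Fin (m+1) → Fin q, F j = ∑ t : Fin q, ∑ j' : Fin m → Fin q, F (Fin.cons t j') :=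
  ((Fintype.sum_equiv (Fin.consEquiv (fun _ => Fin q)) (fun p => F (Fin.cons p.1 p.2)) F
    (fun _ => rfl)).symm).trans (Fintype.sum_prod_type _)

lemma powIndepMulti {k E : Type} [Field k] [Fintype k] [Field E] (f : k →+* E)
    (hf : Function.Injective f) (q : ℕ) (hq : Fintype.card k = q) :
    ∀ m : ℕ, LinearIndependent E
      (fun (j : Fin m → Fin q) => (fun x : Fin m → k => ∏ i, f (x i) ^ ((j i : ℕ)))) := by
  intro m
  induction m with
  | zero =>
      apply linearIndependent_unique_iff.mpr
      intro h
      have := congrFun h (fun i => (0 : k))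
      simpa using this
  | succ m ih =>
      rw [Fintype.linearIndependent_iff]
      intro c hc
      have key : ∀ t : Fin q, ∀ j' : Fin m → Fin q, c (Fin.cons t j') = 0 := by
        intro t
        have h2 : ∀ y : Fin m → k, ∀ t : Fin q,
            ∑ j' : Fin m → Fin q, c (Fin.cons t j') * ∏ i, f (y i) ^ ((j' i : ℕ)) = 0 := by
          intro y
          have h1 : ∀ x : k,
              ∑ t : Fin q, (∑ j' : Fin m → Fin q, c (Fin.cons t j') * ∏ i, f (y i) ^ ((j' i : ℕ)))
                * f x ^ (t : ℕ) = 0 := by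
            intro x
            have hc' := congrFun hc (Fin.cons x y)
            simp only [Finset.sum_apply, Pi.smul_apply, smul_eq_mul, Pi.zero_apply] at hc'
            rw [sum_cons_split (fun j => c j * ∏ i : Fin (m+1), f ((Fin.cons x y : Fin (m+1) → k) i) ^ ((j i : ℕ)))] at hc'
            rw [← hc']
            apply Finset.sum_congr rfl
            intro s _
            rw [Finset.sum_mul]
            apply Finset.sum_congr rfl
            intro j' _
            rw [Fin.prod_univ_succ]
            simp only [Fin.cons_succ, Fin.cons_zero]
            ring
          have := Fintype.linearIndependent_iff.mp (powIndep f hf q hq)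
            (fun t => ∑ j' : Fin m → Fin q, c (Fin.cons t j') * ∏ i, f (y i) ^ ((j' i : ℕ)))
            (by funext x
                simp only [Finset.sum_apply, Pi.smul_apply, smul_eq_mul, Pi.zero_apply]
                exact h1 x)
          exact this
        intro j'
        have := Fintype.linearIndependent_iff.mp ih
          (fun j' => c (Fin.cons t j'))
          (by funext y
              simp only [Finset.sum_apply, Pi.smul_apply, smul_eq_mul, Pi.zero_apply]
              exact h2 y t)
        exact this j'
      intro j
      have := key (j 0) (Fin.tail j)
      rwa [Fin.cons_self_tail] at this
/-- The standard basis of the principal series `V_{n,r} = Ind_{B_n}^{G_n} χ_r`, where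
`G_n = GL₂(R)` for the chain ring `R = O/m^n` (finite local, maximal ideal `(ϖ)`,
`ϖ^n = 0 ≠ ϖ^(n−1)`, `|R| = q^n`), `B` the Borel, `T : k → R` the Teichmüller section
and `dig` the digit functions (`x = Σ_i T(dig x i) ϖ^i`).  The family
`{f_j : j ∈ Ñ^n} ∪ {f_{(∞,j')} = w·f_{(0,j')} : j' ∈ Ñ^{n−1}}` (exponents represented
in `{0,…,q−1}`) is linearly independent, spans `V_{n,r}`, and in particular
`dim_E V_{n,r} = (q+1)·q^{n−1}`. -/
theorem stmt_11 (R E : Type) [CommRing R] [IsLocalRing R] [Fintype R] [Field E]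
    [Algebra (IsLocalRing.ResidueField R) E]
    (n : ℕ) [NeZero n] (ϖ : R)
    (hspan : IsLocalRing.maximalIdeal R = Ideal.span {ϖ})
    (hnil : ϖ ^ n = 0) (hne : ϖ ^ (n - 1) ≠ 0)
    (q : ℕ) (hq : q = Nat.card (IsLocalRing.ResidueField R))
    (hcard : Fintype.card R = q ^ n)
    (T : IsLocalRing.ResidueField R → R) (hT0 : T 0 = 0) (hT1 : T 1 = 1)
    (hTmul : ∀ x y, T (x * y) = T x * T y)
    (hTsec : ∀ x, IsLocalRing.residue R (T x) = x)
    (dig : R → ℕ → IsLocalRing.ResidueField R)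
    (hdig : ∀ x : R, x = ∑ i ∈ Finset.range n, T (dig x i) * ϖ ^ i)
    (B : Subgroup (GL (Fin 2) R))
    (hB : ∀ g : GL (Fin 2) R, g ∈ B ↔ (g : Matrix (Fin 2) (Fin 2) R) 1 0 = 0)
    (r : ℕ) :
    LinearIndependent E
      (fun x : (Fin n → Fin q) ⊕ {j : Fin n → Fin q // (j ⟨0, Nat.pos_of_ne_zero (NeZero.ne n)⟩ : ℕ) = 0} =>
        Sum.elim
          (fun j => fvec R E B r n dig (fun i => (j i : ℕ)))
          (fun j => rightTransl E (matL R 0) (fvec R E B r n dig (fun i => (j.1 i : ℕ))))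
          x) ∧
    Submodule.span E (Set.range
      (Sum.elim
        (fun j : Fin n → Fin q => fvec R E B r n dig (fun i => (j i : ℕ)))
        (fun j : {j : Fin n → Fin q // (j ⟨0, Nat.pos_of_ne_zero (NeZero.ne n)⟩ : ℕ) = 0} =>
          rightTransl E (matL R 0) (fvec R E B r n dig (fun i => (j.1 i : ℕ))))))
      = indRep E B (chiR R E r) ∧
    Module.finrank E (indRep E B (chiR R E r)) = (q + 1) * q ^ (n - 1) := by
  classical
  obtain ⟨m, rfl⟩ : ∃ m, n = m + 1 := ⟨n - 1, by have := NeZero.ne n; omega⟩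
  haveI : Finite (IsLocalRing.ResidueField R) :=
    Finite.of_surjective _ (IsLocalRing.residue_surjective (R := R))
  haveI : Fintype (IsLocalRing.ResidueField R) := Fintype.ofFinite _
  haveI : Fintype {x : R // ¬ IsUnit x} := Fintype.ofFinite _
  have hqk : Fintype.card (IsLocalRing.ResidueField R) = q := by
    rw [hq, Nat.card_eq_fintype_card]
  have hq0 : 0 < q := hqk ▸ Fintype.card_pos
  haveI : NeZero q := ⟨hq0.ne'⟩
  set ι := algebraMap (IsLocalRing.ResidueField R) E with hιdef
  have hinj : Function.Injective ι := ι.injective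
  -- basic facts about digits
  have hϖu : ¬ IsUnit ϖ := by
    intro h
    have h2 := h.pow (m + 1)
    rw [hnil] at h2
    exact h2.ne_zero rfl
  have hresϖ : IsLocalRing.residue R ϖ = 0 :=
    (IsLocalRing.residue_eq_zero_iff ϖ).mpr ((IsLocalRing.mem_maximalIdeal ϖ).mpr hϖu)
  have hres0 : ∀ x : R, IsLocalRing.residue R x = dig x 0 := by
    intro x
    conv_lhs => rw [hdig x]
    rw [map_sum, Finset.sum_range_succ']
    have h0 : IsLocalRing.residue R (T (dig x 0) * ϖ ^ 0) = dig x 0 := by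
      rw [pow_zero, mul_one, hTsec]
    have hrest : ∀ i, IsLocalRing.residue R (T (dig x (i + 1)) * ϖ ^ (i + 1)) = 0 := by
      intro i
      rw [_root_.map_mul, map_pow, hresϖ, zero_pow (Nat.succ_ne_zero i), mul_zero]
    rw [h0, Finset.sum_eq_zero (fun i _ => hrest i), zero_add]
  have hnonunit : ∀ x : R, ¬ IsUnit x ↔ dig x 0 = 0 := by
    intro x
    rw [← hres0 x]
    constructor
    · intro h
      exact (IsLocalRing.residue_eq_zero_iff x).mpr ((IsLocalRing.mem_maximalIdeal x).mpr h)
    · intro h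
      exact mem_nonunits_iff.mp
        ((IsLocalRing.mem_maximalIdeal x).mp ((IsLocalRing.residue_eq_zero_iff x).mp h))
  -- the digit map is a bijection
  set D : R → (Fin (m + 1) → IsLocalRing.ResidueField R) := fun x i => dig x (i : ℕ) with hDdef
  have hDinj : Function.Injective D := by
    intro x y hxy
    rw [hdig x, hdig y]
    apply Finset.sum_congr rfl
    intro i hi
    rw [Finset.mem_range] at hi
    have := congrFun hxy ⟨i, hi⟩
    simp only [hDdef] at this
    rw [this]
  have hDbij : Function.Bijective D := by
    rw [Fintype.bijective_iff_injective_and_card]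
    refine ⟨hDinj, ?_⟩
    rw [hcard, Fintype.card_fun, hqk, Fintype.card_fin]
  set Dm : {x : R // ¬ IsUnit x} → (Fin m → IsLocalRing.ResidueField R) :=
    fun x i => dig x.1 ((i : ℕ) + 1) with hDmdef
  have hDmbij : Function.Bijective Dm := by
    constructor
    · intro x y hxy
      apply Subtype.ext
      apply hDinj
      funext i
      simp only [hDdef]
      induction i using Fin.cases with
      | zero => rw [Fin.val_zero, (hnonunit x.1).mp x.2, (hnonunit y.1).mp y.2]
      | succ i =>
          have := congrFun hxy i
          simp only [hDmdef] at this
          rw [Fin.val_succ, this]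
    · intro d
      obtain ⟨x, hx⟩ := hDbij.2 (Fin.cons 0 d)
      have hx0 : dig x 0 = 0 := by
        have := congrFun hx 0
        simpa [hDdef] using this
      refine ⟨⟨x, (hnonunit x).mpr hx0⟩, ?_⟩
      funext i
      have := congrFun hx i.succ
      simpa [hDdef, Fin.val_succ] using this
  -- linear independence of monomials in the digits
  have hLIR : LinearIndependent E (fun (j : Fin (m + 1) → Fin q) =>
      fun x : R => ι (∏ i : Fin (m + 1), dig x (i : ℕ) ^ ((j i : ℕ)))) := by
    have h1 := (powIndepMulti ι hinj q hqk (m + 1)).map' (LinearMap.funLeft E E D)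
      (LinearMap.ker_eq_bot.mpr (LinearMap.funLeft_injective_of_surjective E E D hDbij.2))
    have h2 : (fun (j : Fin (m + 1) → Fin q) => fun x : R => ι (∏ i : Fin (m + 1), dig x (i : ℕ) ^ ((j i : ℕ))))
        = (⇑(LinearMap.funLeft E E D) ∘ fun (j : Fin (m + 1) → Fin q) =>
            fun x : Fin (m + 1) → IsLocalRing.ResidueField R => ∏ i, ι (x i) ^ ((j i : ℕ))) := by
      funext j x
      simp [LinearMap.funLeft, hDdef, map_prod, map_pow]
    rw [h2]
    exact h1
  have hLIN : LinearIndependent E (fun (j : Fin m → Fin q) =>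
      fun x : {x : R // ¬ IsUnit x} => ι (∏ i : Fin m, dig x.1 ((i : ℕ) + 1) ^ ((j i : ℕ)))) := by
    have h1 := (powIndepMulti ι hinj q hqk m).map' (LinearMap.funLeft E E Dm)
      (LinearMap.ker_eq_bot.mpr (LinearMap.funLeft_injective_of_surjective E E Dm hDmbij.2))
    have h2 : (fun (j : Fin m → Fin q) =>
        fun x : {x : R // ¬ IsUnit x} => ι (∏ i : Fin m, dig x.1 ((i : ℕ) + 1) ^ ((j i : ℕ))))
        = (⇑(LinearMap.funLeft E E Dm) ∘ fun (j : Fin m → Fin q) =>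
            fun x : Fin m → IsLocalRing.ResidueField R => ∏ i, ι (x i) ^ ((j i : ℕ))) := by
      funext j x
      simp [LinearMap.funLeft, hDmdef, map_prod, map_pow]
    rw [h2]
    exact h1
    -- the subtype of exponent vectors with vanishing first entry
  have hmk0 : (⟨0, Nat.pos_of_ne_zero (NeZero.ne (m + 1))⟩ : Fin (m + 1)) = 0 := by
    ext
    simp
  have hSub0 : ∀ j : {j : Fin (m + 1) → Fin q //
      ((j ⟨0, Nat.pos_of_ne_zero (NeZero.ne (m + 1))⟩ : Fin q) : ℕ) = 0}, j.1 0 = 0 := by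
    intro j
    apply Fin.ext
    rw [Fin.val_zero, ← hmk0]
    exact j.2
  let Sub := {j : Fin (m + 1) → Fin q //
      ((j ⟨0, Nat.pos_of_ne_zero (NeZero.ne (m + 1))⟩ : Fin q) : ℕ) = 0}
  let e2 : (Fin m → Fin q) ≃ Sub :=
    { toFun := fun j' => ⟨Fin.cons 0 j', by rw [hmk0, Fin.cons_zero, Fin.val_zero]⟩
      invFun := fun j => Fin.tail j.1
      left_inv := fun j' => by simp
      right_inv := fun j => Subtype.ext (by
        conv_rhs => rw [← Fin.cons_self_tail j.1]
        rw [hSub0 j]) }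
  -- coset representatives and the evaluation map
  let rep : (R ⊕ {x : R // ¬ IsUnit x}) → GL (Fin 2) R := Sum.elim gRep (fun x => dRep x.1)
  let fL : (Fin (m + 1) → Fin q) → (GL (Fin 2) R → E) :=
    fun j => fvec R E B r (m + 1) dig (fun i => (j i : ℕ))
  let fR : Sub → (GL (Fin 2) R → E) :=
    fun j => rightTransl E (matL R 0) (fvec R E B r (m + 1) dig (fun i => ((j.1 i : ℕ))))
  have hval_l_g : ∀ (j : Fin (m + 1) → Fin q) (lam : R),
      fL j (gRep lam) = ι (∏ i : Fin (m + 1), dig lam (i : ℕ) ^ ((j i : ℕ))) :=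
    fun j lam => fvec_at_gRep B hB r (m + 1) dig _ lam
  have hval_l_d : ∀ (j : Fin (m + 1) → Fin q) (mu : R), ¬ IsUnit mu →
      fL j (dRep mu) = 0 :=
    fun j mu hmu => fvec_at_dRep B hB r (m + 1) dig _ mu hmu
  have hval_r_d : ∀ (j : Sub) (mu : R),
      fR j (dRep mu) = ι (∏ i : Fin (m + 1), dig mu (i : ℕ) ^ ((j.1 i : ℕ))) := by
    intro j mu
    show fvec R E B r (m + 1) dig (fun i => ((j.1 i : ℕ))) (dRep mu * matL R 0) = _
    rw [dRep_mul_matL_zero]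
    exact fvec_at_gRep B hB r (m + 1) dig _ mu
  have hprod_tail : ∀ (j : Sub) (x : R),
      (∏ i : Fin (m + 1), dig x (i : ℕ) ^ ((j.1 i : ℕ)))
        = ∏ i : Fin m, dig x ((i : ℕ) + 1) ^ ((j.1 i.succ : ℕ)) := by
    intro j x
    rw [Fin.prod_univ_succ, hSub0 j]
    simp [Fin.val_succ]
  -- linear independence of the family
  have hindF : LinearIndependent E (Sum.elim fL fR) := by
    apply LinearIndependent.of_comp (LinearMap.funLeft E E rep)
    rw [Fintype.linearIndependent_iff]
    intro a ha
    have hbr : ∀ jj : Sub, a (Sum.inr jj) = 0 := by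
      have happly : ∀ x : {x : R // ¬ IsUnit x},
          ∑ jj : Sub, a (Sum.inr jj)
            * ι (∏ i : Fin m, dig x.1 ((i : ℕ) + 1) ^ ((jj.1 i.succ : ℕ))) = 0 := by
        intro x
        have h := congrFun ha (Sum.inr x)
        simp only [Finset.sum_apply, Pi.smul_apply, smul_eq_mul, Function.comp_apply,
          LinearMap.funLeft_apply, Pi.zero_apply, Fintype.sum_sum_type, rep,
          Sum.elim_inl, Sum.elim_inr] at h
        have hz : ∑ j : Fin (m + 1) → Fin q, a (Sum.inl j) * fL j (dRep x.1)
            = ∑ j : Fin (m + 1) → Fin q, (0 : E) :=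
          Finset.sum_congr rfl (fun j _ => by rw [hval_l_d j x.1 x.2, mul_zero])
        rw [hz, Finset.sum_const_zero, zero_add] at h
        rw [← h]
        apply Finset.sum_congr rfl
        intro jj _
        rw [hval_r_d jj x.1, hprod_tail jj x.1]
      intro jj
      have hres := Fintype.linearIndependent_iff.mp hLIN
        (fun j' => a (Sum.inr (e2 j')))
        (by
          funext x
          simp only [Finset.sum_apply, Pi.smul_apply, smul_eq_mul, Pi.zero_apply]
          rw [Fintype.sum_equiv e2
            (fun j' => a (Sum.inr (e2 j')) * ι (∏ i : Fin m, dig x.1 ((i : ℕ) + 1) ^ ((j' i : ℕ))))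
            (fun jj => a (Sum.inr jj) * ι (∏ i : Fin m, dig x.1 ((i : ℕ) + 1) ^ ((jj.1 i.succ : ℕ))))
            (fun j' => by congr 2)]
          exact happly x)
        (e2.symm jj)
      rwa [Equiv.apply_symm_apply] at hres
    have hal : ∀ j : Fin (m + 1) → Fin q, a (Sum.inl j) = 0 := by
      have happly : ∀ lam : R, ∑ j : Fin (m + 1) → Fin q,
          a (Sum.inl j) * ι (∏ i : Fin (m + 1), dig lam (i : ℕ) ^ ((j i : ℕ))) = 0 := by
        intro lam
        have h := congrFun ha (Sum.inl lam)
        simp only [Finset.sum_apply, Pi.smul_apply, smul_eq_mul, Function.comp_apply,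
          LinearMap.funLeft_apply, Pi.zero_apply, Fintype.sum_sum_type, rep,
          Sum.elim_inl, Sum.elim_inr] at h
        have hz : ∑ jj : Sub, a (Sum.inr jj) * fR jj (gRep lam) = ∑ jj : Sub, (0 : E) :=
          Finset.sum_congr rfl (fun jj _ => by rw [hbr jj, zero_mul])
        rw [hz, Finset.sum_const_zero, add_zero] at h
        rw [← h]
        apply Finset.sum_congr rfl
        intro j _
        rw [hval_l_g j lam]
      exact Fintype.linearIndependent_iff.mp hLIR
        (fun j => a (Sum.inl j))
        (by
          funext lam
          simp only [Finset.sum_apply, Pi.smul_apply, smul_eq_mul, Pi.zero_apply]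
          exact happly lam)
    rintro (j | jj)
    · exact hal j
    · exact hbr jj
  -- span and dimension
  have hmem : ∀ i, Sum.elim fL fR i ∈ indRep E B (chiR R E r) := by
    rintro (j | jj)
    · exact fvec_mem B hB r (m + 1) dig _
    · exact rightTransl_mem _ (fvec_mem B hB r (m + 1) dig _)
  have hle : Submodule.span E (Set.range (Sum.elim fL fR)) ≤ indRep E B (chiR R E r) :=
    Submodule.span_le.mpr (Set.range_subset_iff.mpr hmem)
  let evres := (LinearMap.funLeft E E rep).comp (Submodule.subtype (indRep E B (chiR R E r)))
  have hinjres : Function.Injective evres := by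
    rw [← LinearMap.ker_eq_bot, LinearMap.ker_eq_bot']
    intro φ hφ
    have hval : ∀ x, (φ : GL (Fin 2) R → E) (rep x) = 0 := fun x => congrFun hφ x
    have hzero : ∀ g : GL (Fin 2) R, (φ : GL (Fin 2) R → E) g = 0 := by
      intro g
      by_cases hu : IsUnit ((g : Matrix (Fin 2) (Fin 2) R) 1 0)
      · obtain ⟨u, hu'⟩ := hu
        set lam : R := -((↑u⁻¹ : R) * (g : Matrix (Fin 2) (Fin 2) R) 1 1) with hlam
        have hhB : g * matL R lam ∈ B := by
          rw [hB, mulEnt10, matL_coe]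
          norm_num
          rw [hlam, ← hu', mul_neg, ← mul_assoc, Units.mul_inv, one_mul, neg_add_cancel]
        have hdec : (g * matL R lam) * gRep lam = g := by
          rw [mul_assoc, matL_mul_gRep, mul_one]
        have h2 := φ.2 _ hhB (gRep lam)
        rw [hdec] at h2
        have h3 : (φ : GL (Fin 2) R → E) (gRep lam) = 0 := hval (Sum.inl lam)
        rw [h2, h3, mul_zero]
      · have hu11 : IsUnit ((g : Matrix (Fin 2) (Fin 2) R) 1 1) := by
          by_contra h11
          have hdet : IsUnit ((g : Matrix (Fin 2) (Fin 2) R).det) :=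
            (Matrix.isUnit_iff_isUnit_det _).mp g.isUnit
          rw [Matrix.det_fin_two] at hdet
          have h1m : (g : Matrix (Fin 2) (Fin 2) R) 1 1 ∈ IsLocalRing.maximalIdeal R :=
            (IsLocalRing.mem_maximalIdeal _).mpr h11
          have h2m : (g : Matrix (Fin 2) (Fin 2) R) 1 0 ∈ IsLocalRing.maximalIdeal R :=
            (IsLocalRing.mem_maximalIdeal _).mpr hu
          have hdm : (g : Matrix (Fin 2) (Fin 2) R) 0 0 * (g : Matrix (Fin 2) (Fin 2) R) 1 1
              - (g : Matrix (Fin 2) (Fin 2) R) 0 1 * (g : Matrix (Fin 2) (Fin 2) R) 1 0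
              ∈ IsLocalRing.maximalIdeal R :=
            Ideal.sub_mem _ (Ideal.mul_mem_left _ _ h1m) (Ideal.mul_mem_left _ _ h2m)
          exact ((IsLocalRing.mem_maximalIdeal _).mp hdm) hdet
        obtain ⟨v, hv⟩ := hu11
        set mu : R := -((↑v⁻¹ : R) * (g : Matrix (Fin 2) (Fin 2) R) 1 0) with hmu
        have hmuu : ¬ IsUnit mu := by
          intro hmuu
          apply hu
          have hg10 : (g : Matrix (Fin 2) (Fin 2) R) 1 0 = -((↑v : R) * mu) := by
            rw [hmu, mul_neg, ← mul_assoc, Units.mul_inv, one_mul, neg_neg]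
          rw [hg10]
          exact (v.isUnit.mul hmuu).neg
        have hhB : g * dRep (-mu) ∈ B := by
          rw [hB, mulEnt10, dRep_coe]
          norm_num
          rw [hmu, ← hv, mul_neg, ← mul_assoc, Units.mul_inv, one_mul, add_neg_cancel]
        have hdec : (g * dRep (-mu)) * dRep mu = g := by
          rw [mul_assoc, dRep_mul_dRep _ _ (neg_add_cancel mu), mul_one]
        have h2 := φ.2 _ hhB (dRep mu)
        rw [hdec] at h2
        have h3 : (φ : GL (Fin 2) R → E) (dRep mu) = 0 := hval (Sum.inr ⟨mu, hmuu⟩)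
        rw [h2, h3, mul_zero]
    exact Subtype.ext (funext hzero)
  have hcardSub : Fintype.card Sub = q ^ m := by
    rw [← Fintype.card_congr e2, Fintype.card_fun, Fintype.card_fin, Fintype.card_fin]
  have hcardN : Fintype.card {x : R // ¬ IsUnit x} = q ^ m := by
    rw [Fintype.card_congr (Equiv.ofBijective Dm hDmbij), Fintype.card_fun, hqk, Fintype.card_fin]
  have hrank1 : Module.finrank E ↥(Submodule.span E (Set.range (Sum.elim fL fR)))
      = q ^ (m + 1) + q ^ m := by
    rw [finrank_span_eq_card hindF, Fintype.card_sum, Fintype.card_fun, Fintype.card_fin,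
      Fintype.card_fin, hcardSub]
  have hrank2 : Module.finrank E ↥(indRep E B (chiR R E r)) ≤ q ^ (m + 1) + q ^ m := by
    have h := LinearMap.finrank_le_finrank_of_injective hinjres
    rwa [Module.finrank_pi, Fintype.card_sum, hcard, hcardN] at h
  have hspaneq : Submodule.span E (Set.range (Sum.elim fL fR)) = indRep E B (chiR R E r) :=
    Submodule.eq_of_le_of_finrank_le hle (le_trans hrank2 (le_of_eq hrank1.symm))
  refine ⟨hindF, hspaneq, ?_⟩
  rw [← hspaneq, hrank1]
  have hm : m + 1 - 1 = m := rfl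
  rw [hm, pow_succ]
  ring
end

section
/- Let n = 2 and let (j_0, j_1) ∈ Ñ². In V_{2,r} = Ind_{B_2}^{G_2} χ_r one has w·f_{(j_0,j_1)} = f_{(∞,j_1)} if j_0 = 0, and w·f_{(j_0,j_1)} = (−1)^{r+j_1} f_{(r−2j_1−j_0, j_1)} if j_0 ≠ 0 (here r−2j_1−j_0 is computed in ℤ/(q−1)ℤ landing in Ñ∖{0}). Also w·f_{(∞,j_1)} = f_{(0,j_1)}. -/
open Matrix

/-- The basis element `f_{(j₀,j₁)} = Σ_{λ ∈ R} (λ 1; 1 0) ⊗ λ₀^{j₀} λ₁^{j₁}` of the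
principal series `V_{2,r}`, where `λ = [λ₀] + [λ₁]ϖ`. -/
noncomputable def f2 (R E : Type) [CommRing R] [IsLocalRing R] [Fintype R] [Field E]
    [Algebra (IsLocalRing.ResidueField R) E] (B : Subgroup (GL (Fin 2) R)) (r : ℕ)
    (dig : R → ℕ → IsLocalRing.ResidueField R) (j0 j1 : ℕ) : GL (Fin 2) R → E :=
  ∑ lam : R, elemTensor E B (chiR R E r) (matL R lam)
    (algebraMap (IsLocalRing.ResidueField R) E (dig lam 0 ^ j0 * dig lam 1 ^ j1))


lemma aux_pow_mod {K : Type} [Field K] [Finite K] {a : K} (ha : a ≠ 0) {s t q : ℕ}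
    (hq : q = Nat.card K) (h : s % (q - 1) = t % (q - 1)) : a ^ s = a ^ t := by
  have := Fintype.ofFinite K
  have h1 : a ^ (q - 1) = 1 := by
    rw [hq, Nat.card_eq_fintype_card]
    exact FiniteField.pow_card_sub_one_eq_one a ha
  conv_lhs => rw [← Nat.div_add_mod s (q - 1)]
  conv_rhs => rw [← Nat.div_add_mod t (q - 1)]
  rw [pow_add, pow_add, pow_mul, pow_mul, h1, one_pow, one_pow, h]

open Classical in
noncomputable def invo (R : Type) [Monoid R] : R → R :=
  fun x => if h : IsUnit x then ↑h.unit⁻¹ else x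

lemma invo_invol (R : Type) [Monoid R] : Function.Involutive (invo R) := by
  intro x
  by_cases h : IsUnit x
  · have e1 : invo R x = ↑h.unit⁻¹ := dif_pos h
    rw [e1, invo]
    have h2 : IsUnit ((h.unit⁻¹ : Rˣ) : R) := Units.isUnit _
    rw [dif_pos h2]
    have h3 : h2.unit = h.unit⁻¹ := Units.ext h2.unit_spec
    rw [h3, inv_inv, IsUnit.unit_spec]
  · have e1 : invo R x = x := dif_neg h
    rw [e1, e1]

noncomputable def bUnit {R : Type} [CommRing R] (lam mu : R) (h1 : lam * mu = 1)
    (h2 : mu * lam = 1) : GL (Fin 2) R :=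
  ⟨!![lam, 1; 0, -mu], !![mu, 1; 0, -lam],
    by ext i j; fin_cases i <;> fin_cases j <;>
      simp [Matrix.mul_apply, Fin.sum_univ_two] <;> linear_combination h1,
    by ext i j; fin_cases i <;> fin_cases j <;>
      simp [Matrix.mul_apply, Fin.sum_univ_two] <;> linear_combination h2⟩

/-- Action of `w = (0 1; 1 0)` on the basis of `V_{2,r}` over the chain ring
`R = O/m²` (any ramification): for `(j₀, j₁) ∈ Ñ²` with `j₀ ≠ 0`,
`w·f_{(j₀,j₁)} = (−1)^{r+j₁} f_{(r−2j₁−j₀, j₁)}`, where `m = r − 2j₁ − j₀` is the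
representative in `{1,…,q−1}` of the class `r − 2j₁ − j₀ ∈ ℤ/(q−1)ℤ`; moreover
`w·f_{(∞,j₁)} = f_{(0,j₁)}`, i.e. `w·(w·f_{(0,j₁)}) = f_{(0,j₁)}` (and
`w·f_{(0,j₁)} = f_{(∞,j₁)}` holds by definition of `f_{(∞,j₁)}`). -/
theorem stmt_12 (R E : Type) [CommRing R] [IsLocalRing R] [Fintype R] [Field E]
    [Algebra (IsLocalRing.ResidueField R) E]
    (ϖ : R) (hspan : IsLocalRing.maximalIdeal R = Ideal.span {ϖ})
    (hnil : ϖ ^ 2 = 0) (hne : ϖ ≠ 0)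
    (q : ℕ) (hq : q = Nat.card (IsLocalRing.ResidueField R))
    (hcard : Fintype.card R = q ^ 2)
    (T : IsLocalRing.ResidueField R → R) (hT0 : T 0 = 0) (hT1 : T 1 = 1)
    (hTmul : ∀ x y, T (x * y) = T x * T y)
    (hTsec : ∀ x, IsLocalRing.residue R (T x) = x)
    (dig : R → ℕ → IsLocalRing.ResidueField R)
    (hdig : ∀ x : R, x = T (dig x 0) + T (dig x 1) * ϖ)
    (B : Subgroup (GL (Fin 2) R))
    (hB : ∀ g : GL (Fin 2) R, g ∈ B ↔ (g : Matrix (Fin 2) (Fin 2) R) 1 0 = 0)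
    (r j0 j1 m : ℕ)
    (hj0 : 1 ≤ j0) (hj0' : j0 ≤ q - 1) (hj1 : j1 ≤ q - 1)
    (hm : 1 ≤ m) (hm' : m ≤ q - 1) (hmod : (m + 2 * j1 + j0) % (q - 1) = r % (q - 1)) :
    rightTransl E (matL R 0) (f2 R E B r dig j0 j1)
        = ((-1 : E) ^ (r + j1)) • f2 R E B r dig m j1 ∧
    rightTransl E (matL R 0) (rightTransl E (matL R 0) (f2 R E B r dig 0 j1))
        = f2 R E B r dig 0 j1 := by
  classical
  have hmatL : ∀ x : R, ((matL R x : GL (Fin 2) R) : Matrix (Fin 2) (Fin 2) R) = !![x,1;1,0] :=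
    fun x => IsUnit.unit_spec _
  haveI : Finite (IsLocalRing.ResidueField R) :=
    Finite.of_surjective (IsLocalRing.residue R) Ideal.Quotient.mk_surjective
  have hww : matL R 0 * matL R 0 = 1 := by
    refine Units.ext ?_
    rw [Units.val_mul, hmatL, Units.val_one]
    ext i j; fin_cases i <;> fin_cases j <;>
      simp [Matrix.mul_apply, Fin.sum_univ_two, Matrix.one_apply]
  have hresϖ : IsLocalRing.residue R ϖ = 0 := by
    have hmem : ϖ ∈ IsLocalRing.maximalIdeal R := by
      rw [hspan]; exact Ideal.mem_span_singleton_self ϖ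
    exact Ideal.Quotient.eq_zero_iff_mem.mpr hmem
  have hd0 : ∀ x : R, dig x 0 = IsLocalRing.residue R x := by
    intro x
    conv_rhs => rw [hdig x]
    rw [_root_.map_add, _root_.map_mul, hTsec, hTsec, hresϖ, mul_zero, add_zero]
  have hann : ∀ x : R, x * ϖ = 0 → IsLocalRing.residue R x = 0 := by
    intro x hx
    by_cases hu : IsUnit x
    · exact absurd (hu.mul_left_cancel (show x * ϖ = x * 0 by rw [hx, mul_zero])) hne
    · exact Ideal.Quotient.eq_zero_iff_mem.mpr ((IsLocalRing.mem_maximalIdeal x).mpr hu)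
  have hresunit : ∀ x : R, IsUnit x → IsLocalRing.residue R x ≠ 0 := by
    intro x hu h0
    exact (IsLocalRing.mem_maximalIdeal x).mp (Ideal.Quotient.eq_zero_iff_mem.mp h0) hu
  constructor
  · funext y
    have lhs_eq : rightTransl E (matL R 0) (f2 R E B r dig j0 j1) y
        = ∑ lam : R, elemTensor E B (chiR R E r) (matL R lam)
            ((algebraMap (IsLocalRing.ResidueField R) E) (dig lam 0 ^ j0 * dig lam 1 ^ j1))
            (y * matL R 0) := by
      simp only [rightTransl, LinearMap.coe_mk, AddHom.coe_mk, f2, Finset.sum_apply]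
    have rhs_eq : (((-1 : E) ^ (r + j1)) • f2 R E B r dig m j1) y
        = ∑ lam : R, (-1 : E) ^ (r + j1) * elemTensor E B (chiR R E r) (matL R lam)
            ((algebraMap (IsLocalRing.ResidueField R) E) (dig lam 0 ^ m * dig lam 1 ^ j1)) y := by
      simp only [Pi.smul_apply, smul_eq_mul, f2, Finset.sum_apply, Finset.mul_sum]
    rw [lhs_eq, rhs_eq]
    refine Fintype.sum_equiv (invo_invol R).toPerm _ _ ?_
    intro lam
    show elemTensor E B (chiR R E r) (matL R lam)
        ((algebraMap (IsLocalRing.ResidueField R) E) (dig lam 0 ^ j0 * dig lam 1 ^ j1))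
        (y * matL R 0)
      = (-1 : E) ^ (r + j1) * elemTensor E B (chiR R E r) (matL R (invo R lam))
        ((algebraMap (IsLocalRing.ResidueField R) E)
          (dig (invo R lam) 0 ^ m * dig (invo R lam) 1 ^ j1)) y
    by_cases h : IsUnit lam
    · -- unit case
      have hσ : invo R lam = ((h.unit⁻¹ : Rˣ) : R) := dif_pos h
      rw [hσ]
      set mu : R := ((h.unit⁻¹ : Rˣ) : R) with hmu_def
      set a := dig lam 0 with ha_def
      set b := dig lam 1 with hb_def
      set c := dig mu 0 with hc_def
      set d := dig mu 1 with hd_def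
      have hra : IsLocalRing.residue R lam = a := (hd0 lam).symm
      have ha : a ≠ 0 := by rw [← hra]; exact hresunit lam h
      have hTa : T a * T a⁻¹ = 1 := by rw [← hTmul, mul_inv_cancel₀ ha, hT1]
      have hlam : lam = T a + T b * ϖ := hdig lam
      have hmul1 : lam * (T a⁻¹ - T a⁻¹ * T a⁻¹ * T b * ϖ) = 1 := by
        rw [hlam]
        have hnil' : ϖ ^ 2 = 0 := hnil
        linear_combination (1 - T a⁻¹ * T b * ϖ) * hTa - (T a⁻¹ * T a⁻¹ * T b * T b) * hnil'
      have hmu1 : lam * mu = 1 := by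
        have h5 := h.unit.mul_inv
        rwa [h.unit_spec] at h5
      have hmu2 : mu * lam = 1 := by
        have h5 := h.unit.inv_mul
        rwa [h.unit_spec] at h5
      have hmuval : mu = T a⁻¹ - T a⁻¹ * T a⁻¹ * T b * ϖ := by
        calc mu = mu * (lam * (T a⁻¹ - T a⁻¹ * T a⁻¹ * T b * ϖ)) := by rw [hmul1, mul_one]
          _ = (mu * lam) * (T a⁻¹ - T a⁻¹ * T a⁻¹ * T b * ϖ) := by ring
          _ = T a⁻¹ - T a⁻¹ * T a⁻¹ * T b * ϖ := by rw [hmu2, one_mul]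
      have hrc : IsLocalRing.residue R mu = c := (hd0 mu).symm
      have hc : c = a⁻¹ := by
        rw [← hrc, hmuval, _root_.map_sub, _root_.map_mul, hresϖ, mul_zero, sub_zero, hTsec]
      have hdigmu : mu = T c + T d * ϖ := hdig mu
      have hTc : T c = T a⁻¹ := by rw [hc]
      have hd : d = -(c * c * b) := by
        have h0 : (T d + T a⁻¹ * T a⁻¹ * T b) * ϖ = 0 := by
          linear_combination hmuval - hdigmu - hTc
        have h3 := hann _ h0
        rw [_root_.map_add, _root_.map_mul, _root_.map_mul, hTsec, hTsec, hTsec] at h3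
        rw [hc]
        linear_combination h3
      have hac : a * c = 1 := by rw [hc]; exact mul_inv_cancel₀ ha
      have hcne : c ≠ 0 := right_ne_zero_of_mul_eq_one hac
      set X : GL (Fin 2) R := bUnit lam mu hmu1 hmu2 with hX_def
      have hXval : ((X : GL (Fin 2) R) : Matrix (Fin 2) (Fin 2) R) = !![lam,1;0,-mu] := rfl
      have hgw : matL R mu * X = matL R 0 * matL R lam := by
        refine Units.ext ?_
        rw [Units.val_mul, Units.val_mul, hmatL, hmatL, hmatL, hXval]
        ext i j; fin_cases i <;> fin_cases j <;>
          simp [Matrix.mul_apply, Fin.sum_univ_two] <;> linear_combination hmu2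
      have hXB : X ∈ B := by
        rw [hB X, hXval]
        simp
      have hrew : y * matL R 0 * matL R lam = (y * matL R mu) * X := by
        rw [mul_assoc, ← hgw, ← mul_assoc]
      simp only [elemTensor]
      rw [hrew]
      by_cases hy : y * matL R mu ∈ B
      · have hy2 : (y * matL R mu) * X ∈ B := B.mul_mem hy hXB
        rw [if_pos hy2, if_pos hy]
        have hB10 : ((y * matL R mu : GL (Fin 2) R) : Matrix (Fin 2) (Fin 2) R) 1 0 = 0 :=
          (hB _).mp hy
        have hchi : chiR R E r ((y * matL R mu) * X)
            = chiR R E r (y * matL R mu)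
              * (algebraMap (IsLocalRing.ResidueField R) E) ((-c) ^ r) := by
          unfold chiR
          rw [← _root_.map_mul]
          congr 1
          rw [Units.val_mul, Matrix.mul_apply, Fin.sum_univ_two, hXval]
          have ex1 : (!![lam, 1; 0, -mu] : Matrix (Fin 2) (Fin 2) R) 0 1 = 1 := rfl
          have ex2 : (!![lam, 1; 0, -mu] : Matrix (Fin 2) (Fin 2) R) 1 1 = -mu := rfl
          rw [ex1, ex2, hB10, zero_mul, zero_add, _root_.map_mul, _root_.map_neg, hrc, mul_pow]
        rw [hchi]
        have hkey : c ^ (m + 2 * j1 + j0) = c ^ r := aux_pow_mod hcne hq hmod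
        have h1 : c ^ j0 * a ^ j0 = 1 := by rw [← mul_pow, mul_comm c a, hac, one_pow]
        have hkEq : (-c) ^ r * (a ^ j0 * b ^ j1)
            = (-1 : IsLocalRing.ResidueField R) ^ (r + j1) * (c ^ m * d ^ j1) := by
          have e2 : d ^ j1 = (-1 : IsLocalRing.ResidueField R) ^ j1
              * (c ^ j1 * c ^ j1 * b ^ j1) := by
            rw [hd, neg_pow, mul_pow, mul_pow]
          have e4 : c ^ r = c ^ m * (c ^ j1 * c ^ j1) * c ^ j0 := by
            rw [← hkey, show m + 2 * j1 + j0 = m + (j1 + j1) + j0 by ring,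
              pow_add, pow_add, pow_add]
          have hQ : (-1 : IsLocalRing.ResidueField R) ^ j1 * (-1) ^ j1 = 1 := by
            rw [← mul_pow, neg_mul_neg, one_mul, one_pow]
          rw [neg_pow, e4, e2, pow_add]
          linear_combination ((-1 : IsLocalRing.ResidueField R) ^ r * c ^ m * c ^ j1 * c ^ j1
              * b ^ j1) * h1
            - ((-1 : IsLocalRing.ResidueField R) ^ r * c ^ m * c ^ j1 * c ^ j1 * b ^ j1) * hQ
        calc chiR R E r (y * matL R mu)
              * (algebraMap (IsLocalRing.ResidueField R) E) ((-c) ^ r)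
              * (algebraMap (IsLocalRing.ResidueField R) E) (a ^ j0 * b ^ j1)
            = chiR R E r (y * matL R mu)
              * (algebraMap (IsLocalRing.ResidueField R) E) ((-c) ^ r * (a ^ j0 * b ^ j1)) := by
              rw [mul_assoc, ← _root_.map_mul]
          _ = chiR R E r (y * matL R mu)
              * (algebraMap (IsLocalRing.ResidueField R) E)
                ((-1 : IsLocalRing.ResidueField R) ^ (r + j1) * (c ^ m * d ^ j1)) := by
              rw [hkEq]
          _ = (-1 : E) ^ (r + j1) * (chiR R E r (y * matL R mu)
              * (algebraMap (IsLocalRing.ResidueField R) E) (c ^ m * d ^ j1)) := by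
              rw [_root_.map_mul, _root_.map_pow, _root_.map_neg, _root_.map_one]; ring
      · rw [if_neg (fun hc2 => hy ((B.mul_mem_cancel_right hXB).mp hc2)), if_neg hy, mul_zero]
    · -- non-unit case
      have h0 : dig lam 0 = 0 := by
        rw [hd0]
        exact Ideal.Quotient.eq_zero_iff_mem.mpr ((IsLocalRing.mem_maximalIdeal lam).mpr h)
      have e1 : invo R lam = lam := dif_neg h
      rw [e1, h0, zero_pow (show j0 ≠ 0 by omega), zero_pow (show m ≠ 0 by omega),
        zero_mul, _root_.map_zero]
      simp [elemTensor]
  · funext y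
    show f2 R E B r dig 0 j1 (y * matL R 0 * matL R 0) = f2 R E B r dig 0 j1 y
    rw [mul_assoc, hww, mul_one]
end
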